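/- arXiv:1201.3567 — 10 statements merged into one kernel-verified Lean document; each statement's English description precedes it below -/
import Mathlib

section
/- Let φ and ψ be Young functions with lim_{x→0} ψ(x)/x = 0, and define ζ(x) = sup_{y ≥ 0} (φ(xy) − ψ(y)/y). If η(x) = φ^{-1}(ψ(x)/x), then for all x ≥ 0, φ(η*(x)) ≤ ζ(x) ≤ (1/2)φ(η*(2x)). -/
open Filter Topology MeasureTheory
open scoped ENNReal
noncomputable section

/-- A Young function: strictly increasing, convex on `[0,∞)`, vanishing at `0`. -/
def IsYoung (f : ℝ → ℝ) : Prop :=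
  StrictMonoOn f (Set.Ici 0) ∧ ConvexOn ℝ (Set.Ici 0) f ∧ f 0 = 0

/-- Legendre transform of a real function (sup over `y ≥ 0`), `ℝ≥0∞`-valued. -/
def Leg (f : ℝ → ℝ) (x : ℝ) : ℝ≥0∞ :=
  ⨆ y : {y : ℝ // 0 ≤ y}, ENNReal.ofReal (x * y - f y)

/-- Legendre transform of an `ℝ≥0∞`-valued function. -/
def LegE (f : ℝ → ℝ≥0∞) (x : ℝ) : ℝ≥0∞ :=
  ⨆ y : {y : ℝ // 0 ≤ y}, (ENNReal.ofReal (x * y) - f y)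

/-- Monotone extension of a real function on `[0,∞)` to `ℝ≥0∞` arguments. -/
def extE (f : ℝ → ℝ) (t : ℝ≥0∞) : ℝ≥0∞ :=
  ⨆ s : {s : ℝ // 0 ≤ s ∧ ENNReal.ofReal s ≤ t}, ENNReal.ofReal (f s)

/-- Monotone extension of an `ℝ≥0∞`-valued function to `ℝ≥0∞` arguments. -/
def extLT (f : ℝ → ℝ≥0∞) (t : ℝ≥0∞) : ℝ≥0∞ :=
  ⨆ s : {s : ℝ // 0 ≤ s ∧ ENNReal.ofReal s ≤ t}, f s

/-- Generalized (right-continuous) inverse of an `ℝ≥0∞`-valued function. -/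
def invE (g : ℝ → ℝ≥0∞) (t : ℝ≥0∞) : ℝ≥0∞ :=
  ⨅ s : {s : ℝ // 0 ≤ s ∧ t ≤ g s}, ENNReal.ofReal s

/-- `ρ(x) = sup_{y ≥ 0} (φ(xy) - ψ(y))/y`. -/
def rhoSup (φ ψ : ℝ → ℝ) (x : ℝ) : ℝ≥0∞ :=
  ⨆ y : {y : ℝ // 0 ≤ y}, ENNReal.ofReal ((φ (x * y) - ψ y) / y)

/-- `ζ(x) = sup_{y ≥ 0} (φ(xy) - ψ(y)/y)`. -/
def zetaSup (φ ψ : ℝ → ℝ) (x : ℝ) : ℝ≥0∞ :=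
  ⨆ y : {y : ℝ // 0 ≤ y}, ENNReal.ofReal (φ (x * y) - ψ y / y)

/-- Domination order on real functions: `f(x) ≤ C₁ g(C₂ x)` for large `x`. -/
def DominR (f g : ℝ → ℝ) : Prop :=
  ∃ C₁ C₂ x₀ : ℝ, 0 < C₁ ∧ 0 < C₂ ∧ 0 < x₀ ∧ ∀ x ≥ x₀, f x ≤ C₁ * g (C₂ * x)

/-- Equivalence of real functions: mutual domination. -/
def EquivR (f g : ℝ → ℝ) : Prop := DominR f g ∧ DominR g f

/-- Domination order on `ℝ≥0∞`-valued functions. -/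
def DominE (f g : ℝ → ℝ≥0∞) : Prop :=
  ∃ C₁ C₂ x₀ : ℝ, 0 < C₁ ∧ 0 < C₂ ∧ 0 < x₀ ∧
    ∀ x ≥ x₀, f x ≤ ENNReal.ofReal C₁ * g (C₂ * x)

/-- Equivalence of `ℝ≥0∞`-valued functions: mutual domination. -/
def EquivE (f g : ℝ → ℝ≥0∞) : Prop := DominE f g ∧ DominE g f

lemma young_smul {f : ℝ → ℝ} (hf : IsYoung f) {t s : ℝ} (ht0 : 0 ≤ t) (ht1 : t ≤ 1)
    (hs : 0 ≤ s) : f (t * s) ≤ t * f s := by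
  obtain ⟨hmono, hconv, h0⟩ := hf
  have := hconv.2 (Set.self_mem_Ici (a := (0:ℝ))) (Set.mem_Ici.2 hs)
    (show (0:ℝ) ≤ 1 - t by linarith) ht0 (show (1-t) + t = 1 by ring)
  simp only [smul_eq_mul, mul_zero, zero_add, h0] at this
  linarith

lemma young_superadd {f : ℝ → ℝ} (hf : IsYoung f) {a b : ℝ} (ha : 0 ≤ a) (hb : 0 ≤ b) :
    f a + f b ≤ f (a + b) := by
  rcases eq_or_lt_of_le (by linarith : (0:ℝ) ≤ a + b) with h | h
  · have ha0 : a = 0 := by linarith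
    have hb0 : b = 0 := by linarith
    simp [ha0, hb0, hf.2.2]
  · have h1 : f a ≤ (a / (a+b)) * f (a+b) := by
      have := young_smul hf (t := a/(a+b)) (s := a+b) (by positivity)
        (by rw [div_le_one h]; linarith) (by linarith)
      rwa [div_mul_cancel₀ _ (ne_of_gt h)] at this
    have h2 : f b ≤ (b / (a+b)) * f (a+b) := by
      have := young_smul hf (t := b/(a+b)) (s := a+b) (by positivity)
        (by rw [div_le_one h]; linarith) (by linarith)
      rwa [div_mul_cancel₀ _ (ne_of_gt h)] at this
    have h3 : a/(a+b) + b/(a+b) = 1 := by field_simp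
    calc f a + f b ≤ a/(a+b) * f (a+b) + b/(a+b) * f (a+b) := by linarith
      _ = f (a+b) := by rw [← add_mul, h3, one_mul]

lemma young_nonneg {f : ℝ → ℝ} (hf : IsYoung f) {a : ℝ} (ha : 0 ≤ a) : 0 ≤ f a := by
  rcases eq_or_lt_of_le ha with h | h
  · simp [← h, hf.2.2]
  · have := hf.1 (Set.self_mem_Ici (a := (0:ℝ))) (Set.mem_Ici.2 ha) h
    rw [hf.2.2] at this; linarith

/-- With η(x) = φ⁻¹(ψ(x)/x), for all x ≥ 0: φ(η*(x)) ≤ ζ(x) ≤ (1/2)φ(η*(2x)). -/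
theorem stmt3 (φ ψ φinv : ℝ → ℝ) (hφ : IsYoung φ) (hψ : IsYoung ψ)
    (hψ0 : Tendsto (fun x => ψ x / x) (nhdsWithin 0 (Set.Ioi 0)) (nhds 0))
    (hinv : ∀ x ≥ (0:ℝ), 0 ≤ φinv x ∧ φ (φinv x) = x) :
    ∀ x ≥ (0:ℝ),
      extE φ (Leg (fun y => φinv (ψ y / y)) x) ≤ zetaSup φ ψ x ∧
      zetaSup φ ψ x ≤ 2⁻¹ * extE φ (Leg (fun y => φinv (ψ y / y)) (2 * x)) := by
  intro x hx
  set η : ℝ → ℝ := fun y => φinv (ψ y / y) with hηdef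
  have hψdiv : ∀ y : ℝ, 0 ≤ y → 0 ≤ ψ y / y := by
    intro y hy
    rcases eq_or_lt_of_le hy with h | h
    · simp [← h]
    · exact div_nonneg (young_nonneg hψ hy) hy
  have hη0 : ∀ y : ℝ, 0 ≤ y → 0 ≤ η y := fun y hy => (hinv _ (hψdiv y hy)).1
  have hφη : ∀ y : ℝ, 0 ≤ y → φ (η y) = ψ y / y := fun y hy => (hinv _ (hψdiv y hy)).2
  have hmono : MonotoneOn φ (Set.Ici 0) := hφ.1.monotoneOn
  constructor
  · -- left inequality
    refine iSup_le ?_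
    rintro ⟨s, hs0, hsle⟩
    rcases eq_or_lt_of_le hs0 with h | hs
    · simp [← h, hφ.2.2]
    -- key: for 0 ≤ t < s
    have key : ∀ t : ℝ, 0 ≤ t → t < s → ENNReal.ofReal (φ t) ≤ zetaSup φ ψ x := by
      intro t ht0 hts
      have hlt : ENNReal.ofReal t < Leg η x :=
        lt_of_lt_of_le ((ENNReal.ofReal_lt_ofReal_iff_of_nonneg ht0).2 hts) hsle
      rw [Leg, lt_iSup_iff] at hlt
      obtain ⟨⟨y, hy⟩, hlt⟩ := hlt
      have htu : t < x * y - η y := by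
        by_contra hcon
        exact absurd (ENNReal.ofReal_le_ofReal (le_of_not_gt hcon)) (not_le.2 hlt)
      have hu0 : (0:ℝ) ≤ x * y - η y := le_of_lt (lt_of_le_of_lt ht0 htu)
      have h2 : φ t ≤ φ (x * y - η y) :=
        hmono (Set.mem_Ici.2 ht0) (Set.mem_Ici.2 hu0) (le_of_lt htu)
      have h3 : φ (x * y - η y) + φ (η y) ≤ φ (x * y) := by
        have := young_superadd hφ hu0 (hη0 y hy)
        simpa using this
      have h4 : φ t ≤ φ (x * y) - ψ y / y := by
        rw [← hφη y hy]; linarith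
      calc ENNReal.ofReal (φ t) ≤ ENNReal.ofReal (φ (x * y) - ψ y / y) :=
            ENNReal.ofReal_le_ofReal h4
        _ ≤ zetaSup φ ψ x := le_iSup (fun y : {y : ℝ // 0 ≤ y} =>
            ENNReal.ofReal (φ (x * ↑y) - ψ ↑y / ↑y)) ⟨y, hy⟩
    -- limit argument
    have hcont : ContinuousAt φ s := by
      have h1 : ContinuousOn φ (Set.Ioi 0) := by
        have := hφ.2.1.continuousOn_interior
        rwa [interior_Ici] at this
      exact h1.continuousAt (Ioi_mem_nhds hs)
    have htend : Tendsto (fun t => ENNReal.ofReal (φ t)) (𝓝[<] s)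
        (𝓝 (ENNReal.ofReal (φ s))) :=
      (ENNReal.continuous_ofReal.tendsto _).comp (hcont.tendsto.mono_left nhdsWithin_le_nhds)
    have hev : ∀ᶠ t in 𝓝[<] s, ENNReal.ofReal (φ t) ≤ zetaSup φ ψ x := by
      have h1 : ∀ᶠ t in 𝓝[<] s, 0 < t := (eventually_gt_nhds hs).filter_mono nhdsWithin_le_nhds
      have h2 : ∀ᶠ t in 𝓝[<] s, t < s := eventually_mem_nhdsWithin
      filter_upwards [h1, h2] with t ht1 ht2
      exact key t (le_of_lt ht1) ht2
    exact le_of_tendsto htend hev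
  · -- right inequality
    refine iSup_le ?_
    rintro ⟨y, hy⟩
    simp only
    set a := x * y with hadef
    set e := η y with hedef
    have ha0 : 0 ≤ a := mul_nonneg hx hy
    have he0 : 0 ≤ e := hη0 y hy
    rcases lt_or_ge (2 * a - e) 0 with hcase | hcase
    · have hae : a ≤ e := by linarith
      have : φ a ≤ φ e := hmono (Set.mem_Ici.2 ha0) (Set.mem_Ici.2 he0) hae
      have hle0 : φ a - ψ y / y ≤ 0 := by rw [← hφη y hy]; linarith
      rw [ENNReal.ofReal_eq_zero.2 hle0]
      exact zero_le
    · have hconv := hφ.2.1.2 (Set.mem_Ici.2 hcase) (Set.mem_Ici.2 he0)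
        (show (0:ℝ) ≤ 2⁻¹ by norm_num) (show (0:ℝ) ≤ 2⁻¹ by norm_num)
        (show (2⁻¹:ℝ) + 2⁻¹ = 1 by norm_num)
      have haeq : (2⁻¹:ℝ) • (2 * a - e) + (2⁻¹:ℝ) • e = a := by
        simp only [smul_eq_mul]; ring
      rw [haeq] at hconv
      simp only [smul_eq_mul] at hconv
      have hφe : (0:ℝ) ≤ φ e := young_nonneg hφ he0
      have hkey : φ a - ψ y / y ≤ 2⁻¹ * φ (2 * a - e) := by
        rw [← hφη y hy]; linarith
      have hmem : ENNReal.ofReal (2 * a - e) ≤ Leg η (2 * x) := by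
        have : (2 * x) * y - η y = 2 * a - e := by rw [hadef, hedef]; ring
        calc ENNReal.ofReal (2 * a - e) = ENNReal.ofReal ((2 * x) * y - η y) := by rw [this]
          _ ≤ Leg η (2 * x) := le_iSup (fun z : {z : ℝ // 0 ≤ z} =>
              ENNReal.ofReal ((2 * x) * ↑z - η ↑z)) ⟨y, hy⟩
      have hext : ENNReal.ofReal (φ (2 * a - e)) ≤ extE φ (Leg η (2 * x)) :=
        le_iSup (fun s : {s : ℝ // 0 ≤ s ∧ ENNReal.ofReal s ≤ Leg η (2 * x)} =>
          ENNReal.ofReal (φ ↑s)) ⟨2 * a - e, hcase, hmem⟩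
      calc ENNReal.ofReal (φ a - ψ y / y) ≤ ENNReal.ofReal (2⁻¹ * φ (2 * a - e)) :=
            ENNReal.ofReal_le_ofReal hkey
        _ = 2⁻¹ * ENNReal.ofReal (φ (2 * a - e)) := by
            rw [ENNReal.ofReal_mul (by norm_num : (0:ℝ) ≤ 2⁻¹)]
            congr 1
            rw [ENNReal.ofReal_inv_of_pos (by norm_num : (0:ℝ) < 2), ENNReal.ofReal_ofNat]
        _ ≤ 2⁻¹ * extE φ (Leg η (2 * x)) := mul_le_mul_right hext _
end
end

section
/- Let F, G: [0,∞) → [0,∞) be increasing continuous functions with F(0) = G(0) = 0 and F(∞) = G(∞) = ∞. Then the following are equivalent: (i) F ∘ G^{-1} is equivalent to a Young function; (ii) there exist C, x₀ > 0 such that F(G^{-1}(sx)) ≥ C^{-1} s F(G^{-1}(x)) for all s ≥ 1 and x ≥ x₀; (iii) there exist C, x₀ > 0 such that F(sx)/F(x) ≥ C^{-1} G(sx)/G(x) for all s ≥ 1 and x ≥ x₀. -/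
/-!
If `Y` is Young then `Y (s y) ≥ s Y y` for `s ≥ 1` (convexity and `Y 0 = 0`), and this survives
passing to an equivalent function up to a dilation of the argument, which monotonicity absorbs
into the constant; this gives (i) ⇒ (ii). Conversely, (ii) says exactly that the slopes
`H t / t` of `H = F ∘ G⁻¹` are increasing up to a constant factor, so the upper envelope of the
lines of these slopes is a convex function squeezed between `H x` and `C H x`.
Finally, (ii) and (iii) are the same inequality written in the variables `x` and `G x`.
-/
open Filter Topology MeasureTheory
open scoped ENNReal
noncomputable section

open Set

def QuasiSuperlinear (H : ℝ → ℝ) : Prop :=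
  ∃ C x₀ : ℝ, 0 < C ∧ 0 < x₀ ∧ ∀ s ≥ (1:ℝ), ∀ x ≥ x₀, C⁻¹ * s * H x ≤ H (s * x)

lemma ConvexOn.mul_le_apply_mul {Y : ℝ → ℝ} (hY : ConvexOn ℝ (Ici 0) Y) (hY0 : Y 0 = 0)
    {s t : ℝ} (hs : 1 ≤ s) (ht : 0 ≤ t) : s * Y t ≤ Y (s * t) := by
  have hs0 : 0 < s := one_pos.trans_le hs
  have h := hY.2 (mem_Ici.2 (mul_nonneg hs0.le ht)) (mem_Ici.2 le_rfl) (inv_nonneg.2 hs0.le)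
    (sub_nonneg.2 (inv_le_one_of_one_le₀ hs)) (add_sub_cancel _ _)
  simp only [smul_eq_mul, mul_zero, add_zero, hY0, inv_mul_cancel_left₀ hs0.ne'] at h
  rwa [le_inv_mul_iff₀ hs0] at h

lemma quasiSuperlinear_of_le_mul_apply_mul {H : ℝ → ℝ} (hmono : MonotoneOn H (Ici 0))
    (hnn : ∀ x ≥ 0, 0 ≤ H x) {D κ X : ℝ} (hD : 0 < D) (hκ : 1 ≤ κ) (hX : 0 < X)
    (h : ∀ s ≥ (1:ℝ), ∀ x ≥ X, s * H x ≤ D * H (κ * s * x)) : QuasiSuperlinear H := by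
  have hκ0 : 0 < κ := one_pos.trans_le hκ
  refine ⟨κ * max D 1, X, by positivity, hX, fun s hs x hx => ?_⟩
  have hx0 : 0 ≤ x := hX.le.trans hx
  have hsx : x ≤ s * x := le_mul_of_one_le_left hx0 hs
  have hHsx : 0 ≤ H (s * x) := hnn _ (hx0.trans hsx)
  rw [mul_assoc, inv_mul_le_iff₀ (by positivity)]
  rcases le_total s κ with hsκ | hκs
  · calc s * H x ≤ κ * H (s * x) :=
          mul_le_mul hsκ (hmono hx0 (hx0.trans hsx) hsx) (hnn x hx0) hκ0.le
      _ ≤ κ * max D 1 * H (s * x) := by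
          rw [mul_assoc]; gcongr; exact le_mul_of_one_le_left hHsx (le_max_right _ _)
  · have h' := h (s / κ) ((one_le_div hκ0).2 hκs) x hx
    rw [mul_div_cancel₀ _ hκ0.ne'] at h'
    calc s * H x = κ * (s / κ * H x) := by field_simp
      _ ≤ κ * (D * H (s * x)) := by gcongr
      _ ≤ κ * max D 1 * H (s * x) := by
          rw [mul_assoc]; gcongr; exact le_max_left _ _

lemma quasiSuperlinear_of_equivR_isYoung {H Y : ℝ → ℝ} (hmono : MonotoneOn H (Ici 0))
    (hnn : ∀ x ≥ 0, 0 ≤ H x) (hY : IsYoung Y) (hHY : EquivR H Y) : QuasiSuperlinear H := by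
  obtain ⟨⟨A, a, x₁, hA, ha, hx₁, hHY⟩, ⟨B, b, x₂, hB, hb, -, hYH⟩⟩ := hHY
  refine quasiSuperlinear_of_le_mul_apply_mul hmono hnn (mul_pos hA hB) (le_max_right (a * b) 1)
    (lt_max_of_lt_left hx₁ : 0 < max x₁ (x₂ / a)) fun s hs x hx => ?_
  have hx0 : 0 ≤ x := hx₁.le.trans ((le_max_left _ _).trans hx)
  have hax : x₂ ≤ a * x := (div_le_iff₀' ha).1 ((le_max_right _ _).trans hx)
  have hsax : x₂ ≤ s * (a * x) := hax.trans (le_mul_of_one_le_left (by positivity) hs)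
  calc s * H x ≤ s * (A * Y (a * x)) := by
        gcongr; exact hHY x ((le_max_left _ _).trans hx)
    _ = A * (s * Y (a * x)) := by ring
    _ ≤ A * Y (s * (a * x)) := by gcongr; exact hY.2.1.mul_le_apply_mul hY.2.2 hs (by positivity)
    _ ≤ A * (B * H (b * (s * (a * x)))) := by gcongr; exact hYH _ hsax
    _ ≤ A * B * H (max (a * b) 1 * s * x) := by
        rw [← mul_assoc]; gcongr
        refine hmono (mem_Ici.2 (by positivity)) (mem_Ici.2 (by positivity)) ?_
        calc b * (s * (a * x)) = a * b * s * x := by ring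
          _ ≤ max (a * b) 1 * s * x := by gcongr; exact le_max_left _ _

def supAffine (h : ℝ → ℝ) (x : ℝ) : ℝ := ⨆ t : Ici (0:ℝ), h t * (x - t)

section SupAffine

variable {h : ℝ → ℝ}

lemma affine_le_mul_of_forall_le (hnn : ∀ t, 0 ≤ h t) {x B : ℝ} (hx : 0 ≤ x)
    (hB : ∀ t ∈ Icc 0 x, h t ≤ B) {t : ℝ} (ht : 0 ≤ t) : h t * (x - t) ≤ B * x := by
  rcases le_total t x with htx | hxt
  · calc h t * (x - t) ≤ h t * x := by gcongr; exacts [hnn t, by linarith]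
      _ ≤ B * x := by gcongr; exact hB t ⟨ht, htx⟩
  · have hB0 : 0 ≤ B := (hnn 0).trans (hB 0 ⟨le_rfl, hx⟩)
    exact (mul_nonpos_of_nonneg_of_nonpos (hnn t) (by linarith)).trans (by positivity)

lemma bddAbove_range_affine (hnn : ∀ t, 0 ≤ h t) (hbdd : ∀ x, BddAbove (h '' Icc 0 x))
    {x : ℝ} (hx : 0 ≤ x) : BddAbove (range fun t : Ici (0:ℝ) => h t * (x - t)) := by
  obtain ⟨B, hB⟩ := hbdd x
  exact ⟨B * x, forall_mem_range.2 fun t =>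
    affine_le_mul_of_forall_le hnn hx (fun t ht => hB ⟨t, ht, rfl⟩) t.2⟩

lemma supAffine_le_mul (hnn : ∀ t, 0 ≤ h t) {x B : ℝ} (hx : 0 ≤ x)
    (hB : ∀ t ∈ Icc 0 x, h t ≤ B) : supAffine h x ≤ B * x :=
  ciSup_le fun t => affine_le_mul_of_forall_le hnn hx hB t.2

lemma supAffine_zero (hnn : ∀ t, 0 ≤ h t) (hbdd : ∀ x, BddAbove (h '' Icc 0 x)) :
    supAffine h 0 = 0 := by
  refine le_antisymm ?_ ?_
  · simpa using supAffine_le_mul hnn le_rfl (B := h 0) fun t ht => by rw [le_antisymm ht.2 ht.1]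
  · simpa [supAffine] using
      le_ciSup (bddAbove_range_affine hnn hbdd le_rfl) (⟨0, self_mem_Ici⟩ : Ici (0:ℝ))

lemma monotoneOn_supAffine (hnn : ∀ t, 0 ≤ h t) (hbdd : ∀ x, BddAbove (h '' Icc 0 x)) :
    MonotoneOn (supAffine h) (Ici 0) := fun _ _ _ hy hxy =>
  ciSup_mono (bddAbove_range_affine hnn hbdd hy) fun t => by gcongr; exact hnn t

lemma convexOn_supAffine (hnn : ∀ t, 0 ≤ h t) (hbdd : ∀ x, BddAbove (h '' Icc 0 x)) :
    ConvexOn ℝ (Ici 0) (supAffine h) := by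
  refine ⟨convex_Ici 0, fun x hx y hy a b ha hb hab => ciSup_le fun t => ?_⟩
  have hline : h t * (a • x + b • y - t) = a * (h t * (x - t)) + b * (h t * (y - t)) := by
    simp only [smul_eq_mul]; linear_combination (h t * t) * hab
  rw [hline, smul_eq_mul, smul_eq_mul]
  gcongr
  exacts [le_ciSup (bddAbove_range_affine hnn hbdd hx) t,
    le_ciSup (bddAbove_range_affine hnn hbdd hy) t]

lemma isYoung_id_add_supAffine (hnn : ∀ t, 0 ≤ h t) (hbdd : ∀ x, BddAbove (h '' Icc 0 x)) :
    IsYoung fun x => x + supAffine h x :=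
  ⟨strictMono_id.strictMonoOn _ |>.add_monotone (monotoneOn_supAffine hnn hbdd),
    (convexOn_id (convex_Ici 0)).add (convexOn_supAffine hnn hbdd),
    by simp [supAffine_zero hnn hbdd]⟩

end SupAffine

lemma div_le_mul_div_of_le {H : ℝ → ℝ} {C x₀ : ℝ} (hx₀ : 0 < x₀)
    (hH : ∀ s ≥ (1:ℝ), ∀ x ≥ x₀, C⁻¹ * s * H x ≤ H (s * x)) (hC : 0 < C) {t x : ℝ}
    (ht : x₀ ≤ t) (htx : t ≤ x) : H t / t ≤ C * (H x / x) := by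
  have ht0 : 0 < t := hx₀.trans_le ht
  have hx0 : 0 < x := ht0.trans_le htx
  have h := hH (x / t) ((one_le_div ht0).2 htx) t ht
  rw [div_mul_cancel₀ _ ht0.ne'] at h
  rw [← mul_div_assoc, div_le_div_iff₀ ht0 hx0]
  calc H t * x = C * (C⁻¹ * (x / t) * H t) * t := by field_simp
    _ ≤ C * H x * t := by gcongr

lemma exists_isYoung_equivR_of_quasiSuperlinear {H : ℝ → ℝ} (hpos : ∀ x > 0, 0 < H x)
    (hH : QuasiSuperlinear H) : ∃ Y, IsYoung Y ∧ EquivR H Y := by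
  obtain ⟨C, x₀, hC, hx₀, hH⟩ := hH
  set h : ℝ → ℝ := fun t => H (max t x₀) / max t x₀ with h_def
  have hpos' : ∀ t, 0 < h t := fun t =>
    have hmax : 0 < max t x₀ := hx₀.trans_le (le_max_right _ _)
    div_pos (hpos _ hmax) hmax
  have hnn : ∀ t, 0 ≤ h t := fun t => (hpos' t).le
  have hq : ∀ {t x}, t ≤ x → h t ≤ C * h x := fun htx =>
    div_le_mul_div_of_le hx₀ hH hC (le_max_right _ _) (max_le_max_right x₀ htx)
  have hbdd : ∀ x, BddAbove (h '' Icc 0 x) := fun x =>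
    ⟨C * h x, forall_mem_image.2 fun t ht => hq ht.2⟩
  have hHx : ∀ x ≥ x₀, H x = h x * x := fun x hx => by
    show H x = H (max x x₀) / max x x₀ * x
    rw [max_eq_left hx, div_mul_cancel₀ _ (hx₀.trans_le hx).ne']
  refine ⟨_, isYoung_id_add_supAffine hnn hbdd,
    ⟨1, 2, x₀, one_pos, two_pos, hx₀, fun x hx => ?_⟩,
    ⟨C / h 0 + C, 1, x₀, by have := hpos' 0; positivity, one_pos, hx₀, fun x hx => ?_⟩⟩
  · have hx0 : 0 ≤ x := hx₀.le.trans hx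
    have hline : h x * (2 * x - x) ≤ supAffine h (2 * x) :=
      le_ciSup (bddAbove_range_affine hnn hbdd (by positivity)) (⟨x, hx0⟩ : Ici (0:ℝ))
    show H x ≤ 1 * (2 * x + supAffine h (2 * x))
    rw [one_mul, hHx x hx]
    linarith
  · have hx0 : 0 ≤ x := hx₀.le.trans hx
    have hlin : x ≤ C / h 0 * H x := by
      rw [hHx x hx, div_mul_eq_mul_div, le_div_iff₀ (hpos' 0)]
      nlinarith [hq hx0, hpos' x]
    have hsup : supAffine h x ≤ C * H x := by
      rw [hHx x hx, ← mul_assoc]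
      exact supAffine_le_mul hnn hx0 fun t ht => hq ht.2
    show x + supAffine h x ≤ (C / h 0 + C) * H (1 * x)
    rw [one_mul]
    linarith

section RightInverse

variable {f g : ℝ → ℝ}

lemma StrictMonoOn.nonneg_of_map_zero (hf : StrictMonoOn f (Ici 0)) (hf0 : f 0 = 0) {x : ℝ}
    (hx : 0 ≤ x) : 0 ≤ f x :=
  hf0 ▸ hf.monotoneOn self_mem_Ici hx hx

lemma StrictMonoOn.pos_of_map_zero (hf : StrictMonoOn f (Ici 0)) (hf0 : f 0 = 0) {x : ℝ}
    (hx : 0 < x) : 0 < f x :=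
  hf0 ▸ hf self_mem_Ici hx.le hx

lemma StrictMonoOn.le_apply_rightInv_iff (hf : StrictMonoOn f (Ici 0))
    (hg : ∀ x ≥ (0:ℝ), 0 ≤ g x ∧ f (g x) = x) {a x : ℝ} (ha : 0 ≤ a) (hx : 0 ≤ x) :
    a ≤ g x ↔ f a ≤ x := by
  rw [← hf.le_iff_le ha (hg x hx).1, (hg x hx).2]

lemma StrictMonoOn.lt_apply_rightInv_iff (hf : StrictMonoOn f (Ici 0))
    (hg : ∀ x ≥ (0:ℝ), 0 ≤ g x ∧ f (g x) = x) {a x : ℝ} (ha : 0 ≤ a) (hx : 0 ≤ x) :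
    a < g x ↔ f a < x := by
  rw [← hf.lt_iff_lt ha (hg x hx).1, (hg x hx).2]

lemma StrictMonoOn.rightInv_apply_eq (hf : StrictMonoOn f (Ici 0))
    (hg : ∀ x ≥ (0:ℝ), 0 ≤ g x ∧ f (g x) = x) {y : ℝ} (hy : 0 ≤ y) (hfy : 0 ≤ f y) :
    g (f y) = y :=
  hf.injOn (hg _ hfy).1 hy (hg _ hfy).2

lemma StrictMonoOn.monotoneOn_rightInv (hf : StrictMonoOn f (Ici 0))
    (hg : ∀ x ≥ (0:ℝ), 0 ≤ g x ∧ f (g x) = x) : MonotoneOn g (Ici 0) := fun x hx y hy hxy =>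
  (hf.le_apply_rightInv_iff hg (hg x hx).1 hy).2 (by rwa [(hg x hx).2])

end RightInverse

section Composition

variable {F G Ginv : ℝ → ℝ}

lemma exists_ratio_le_of_quasiSuperlinear (hFmono : StrictMonoOn F (Ici 0))
    (hGmono : StrictMonoOn G (Ici 0)) (hF0 : F 0 = 0) (hG0 : G 0 = 0) (hGi : Tendsto G atTop atTop)
    (hGinv : ∀ x ≥ (0:ℝ), 0 ≤ Ginv x ∧ G (Ginv x) = x)
    (hH : QuasiSuperlinear fun x => F (Ginv x)) :
    ∃ C x₀ : ℝ, 0 < C ∧ 0 < x₀ ∧ ∀ s ≥ (1:ℝ), ∀ x ≥ x₀,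
      C⁻¹ * (G (s * x) / G x) ≤ F (s * x) / F x := by
  obtain ⟨C, y₀, hC, hy₀, hH⟩ := hH
  obtain ⟨M, hM⟩ := eventually_atTop.1 (hGi.eventually_ge_atTop y₀)
  refine ⟨C, max M 1, hC, one_pos.trans_le (le_max_right _ _), fun s hs x hx => ?_⟩
  have hx0 : 0 < x := one_pos.trans_le ((le_max_right _ _).trans hx)
  have hsx : x ≤ s * x := le_mul_of_one_le_left hx0.le hs
  have hGx : y₀ ≤ G x := hM x ((le_max_left _ _).trans hx)
  have hGx0 : 0 < G x := hy₀.trans_le hGx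
  have h := hH (G (s * x) / G x)
    ((one_le_div hGx0).2 (hGmono.monotoneOn hx0.le (hx0.le.trans hsx) hsx)) (G x) hGx
  beta_reduce at h
  rw [div_mul_cancel₀ _ hGx0.ne', hGmono.rightInv_apply_eq hGinv hx0.le hGx0.le,
    hGmono.rightInv_apply_eq hGinv (hx0.le.trans hsx)
      (hGmono.nonneg_of_map_zero hG0 (hx0.le.trans hsx))] at h
  rwa [le_div_iff₀ (hFmono.pos_of_map_zero hF0 hx0)]

lemma quasiSuperlinear_of_exists_ratio_le (hFmono : StrictMonoOn F (Ici 0))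
    (hGmono : StrictMonoOn G (Ici 0)) (hF0 : F 0 = 0) (hG0 : G 0 = 0)
    (hGinv : ∀ x ≥ (0:ℝ), 0 ≤ Ginv x ∧ G (Ginv x) = x)
    (hiii : ∃ C x₀ : ℝ, 0 < C ∧ 0 < x₀ ∧ ∀ s ≥ (1:ℝ), ∀ x ≥ x₀,
      C⁻¹ * (G (s * x) / G x) ≤ F (s * x) / F x) :
    QuasiSuperlinear fun x => F (Ginv x) := by
  obtain ⟨C, y₀, hC, hy₀, hiii⟩ := hiii
  have hGy₀ : 0 < G y₀ := hGmono.pos_of_map_zero hG0 hy₀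
  refine ⟨C, G y₀, hC, hGy₀, fun s hs x hx => ?_⟩
  have hx0 : 0 < x := hGy₀.trans_le hx
  have hsx0 : 0 ≤ s * x := by positivity
  have hy : y₀ ≤ Ginv x := (hGmono.le_apply_rightInv_iff hGinv hy₀.le hx0.le).2 hx
  have hy0 : 0 < Ginv x := hy₀.trans_le hy
  have hyu : Ginv x ≤ Ginv (s * x) :=
    hGmono.monotoneOn_rightInv hGinv hx0.le hsx0 (le_mul_of_one_le_left hx0.le hs)
  have h := hiii (Ginv (s * x) / Ginv x) ((one_le_div hy0).2 hyu) (Ginv x) hy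
  rw [div_mul_cancel₀ _ hy0.ne', (hGinv _ hsx0).2, (hGinv _ hx0.le).2, mul_div_assoc,
    div_self hx0.ne', mul_one, le_div_iff₀ (hFmono.pos_of_map_zero hF0 hy0)] at h
  exact h

end Composition

theorem stmt5_general (F G Ginv : ℝ → ℝ)
    (hFmono : StrictMonoOn F (Set.Ici 0)) (hGmono : StrictMonoOn G (Set.Ici 0))
    (hF0 : F 0 = 0) (hG0 : G 0 = 0)
    (hGi : Tendsto G atTop atTop)
    (hGinv : ∀ x ≥ (0:ℝ), 0 ≤ Ginv x ∧ G (Ginv x) = x) :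
    ((∃ Y, IsYoung Y ∧ EquivR (fun x => F (Ginv x)) Y) ↔
      (∃ C x₀ : ℝ, 0 < C ∧ 0 < x₀ ∧ ∀ s ≥ (1:ℝ), ∀ x ≥ x₀,
        C⁻¹ * s * F (Ginv x) ≤ F (Ginv (s * x)))) ∧
    ((∃ C x₀ : ℝ, 0 < C ∧ 0 < x₀ ∧ ∀ s ≥ (1:ℝ), ∀ x ≥ x₀,
        C⁻¹ * s * F (Ginv x) ≤ F (Ginv (s * x))) ↔
      (∃ C x₀ : ℝ, 0 < C ∧ 0 < x₀ ∧ ∀ s ≥ (1:ℝ), ∀ x ≥ x₀,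
        C⁻¹ * (G (s * x) / G x) ≤ F (s * x) / F x)) := by
  have hmono : MonotoneOn (fun x => F (Ginv x)) (Ici 0) :=
    hFmono.monotoneOn.comp (hGmono.monotoneOn_rightInv hGinv) fun x hx => (hGinv x hx).1
  have hnn : ∀ x ≥ 0, 0 ≤ F (Ginv x) := fun x hx =>
    hFmono.nonneg_of_map_zero hF0 (hGinv x hx).1
  have hpos : ∀ x > 0, 0 < F (Ginv x) := fun x hx =>
    hFmono.pos_of_map_zero hF0
      ((hGmono.lt_apply_rightInv_iff hGinv le_rfl hx.le).2 (by rwa [hG0]))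
  exact ⟨⟨fun ⟨_, hY, hHY⟩ => quasiSuperlinear_of_equivR_isYoung hmono hnn hY hHY,
      exists_isYoung_equivR_of_quasiSuperlinear hpos⟩,
    ⟨exists_ratio_le_of_quasiSuperlinear hFmono hGmono hF0 hG0 hGi hGinv,
      quasiSuperlinear_of_exists_ratio_le hFmono hGmono hF0 hG0 hGinv⟩⟩

/-- Equivalence of the three conditions from Lemma 5.4 (asymptotic convexity). -/
theorem stmt5 (F G Ginv : ℝ → ℝ)
    (hFmono : StrictMonoOn F (Set.Ici 0)) (hGmono : StrictMonoOn G (Set.Ici 0))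
    (hFc : ContinuousOn F (Set.Ici 0)) (hGc : ContinuousOn G (Set.Ici 0))
    (hF0 : F 0 = 0) (hG0 : G 0 = 0)
    (hFi : Tendsto F atTop atTop) (hGi : Tendsto G atTop atTop)
    (hGinv : ∀ x ≥ (0:ℝ), 0 ≤ Ginv x ∧ G (Ginv x) = x) :
    ((∃ Y, IsYoung Y ∧ EquivR (fun x => F (Ginv x)) Y) ↔
      (∃ C x₀ : ℝ, 0 < C ∧ 0 < x₀ ∧ ∀ s ≥ (1:ℝ), ∀ x ≥ x₀,
        C⁻¹ * s * F (Ginv x) ≤ F (Ginv (s * x)))) ∧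
    ((∃ C x₀ : ℝ, 0 < C ∧ 0 < x₀ ∧ ∀ s ≥ (1:ℝ), ∀ x ≥ x₀,
        C⁻¹ * s * F (Ginv x) ≤ F (Ginv (s * x))) ↔
      (∃ C x₀ : ℝ, 0 < C ∧ 0 < x₀ ∧ ∀ s ≥ (1:ℝ), ∀ x ≥ x₀,
        C⁻¹ * (G (s * x) / G x) ≤ F (s * x) / F x)) :=
  stmt5_general F G Ginv hFmono hGmono hF0 hG0 hGi hGinv
end
end

section
/- Let φ and ψ be Young functions with lim_{x→∞} φ(x)/x = ∞. If φ^{-1} ∘ ψ is equivalent to a Young function, then (ψ*)^{-1} ∘ φ* is also equivalent to a Young function. -/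
open Filter Topology MeasureTheory
open scoped ENNReal
noncomputable section

/-!
Let `Φ = φ*`, finite because `φ` is superlinear, and let `φ u = Φ x = ψ w`. Testing `ψ*` against
the point `w` and bounding `ψ(w)/w · y ≤ ψ y + ψ w` give `(ψ*)⁻¹ (φ* x) ≍ Φ x / w`. Since
`Φ x ≤ x u ≤ 2 Φ x`, the slope `Φ x / (x w)` is comparable to `u / w`, and `u = φ⁻¹ (ψ w)` is
comparable to `G w` for the Young function `G ≍ φ⁻¹ ∘ ψ`. As `G` has increasing slopes and `u`
increases with `x`, the slope `Φ x / (x w)` is increasing up to a constant factor; its least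
increasing majorant `n` is comparable to it, and `Y x = ∫₀ˣ n` is the required Young function.
-/

open Set

namespace IsYoung

variable {f : ℝ → ℝ}

lemma nonneg (hf : IsYoung f) {x : ℝ} (hx : 0 ≤ x) : 0 ≤ f x :=
  hf.2.2 ▸ hf.1.monotoneOn self_mem_Ici hx hx

lemma pos (hf : IsYoung f) {x : ℝ} (hx : 0 < x) : 0 < f x :=
  hf.2.2 ▸ hf.1 self_mem_Ici hx.le hx

lemma mono (hf : IsYoung f) {a b : ℝ} (ha : 0 ≤ a) (hab : a ≤ b) : f a ≤ f b :=
  hf.1.monotoneOn ha (ha.trans hab) hab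

lemma le_of_apply_le (hf : IsYoung f) {a b : ℝ} (ha : 0 ≤ a) (hb : 0 ≤ b) (h : f a ≤ f b) :
    a ≤ b :=
  (hf.1.le_iff_le ha hb).1 h

lemma apply_div_le_apply_div (hf : IsYoung f) {a b : ℝ} (ha : 0 < a) (hab : a ≤ b) :
    f a / a ≤ f b / b := by
  simpa [hf.2.2] using hf.2.1.secant_mono self_mem_Ici ha.le (ha.le.trans hab) ha.ne'
    (ha.trans_le hab).ne' hab

lemma apply_one_mul_le (hf : IsYoung f) {x : ℝ} (hx : 1 ≤ x) : f 1 * x ≤ f x := by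
  simpa [le_div_iff₀ (one_pos.trans_le hx)] using hf.apply_div_le_apply_div one_pos hx

lemma apply_div_mul_le_add (hf : IsYoung f) {w y : ℝ} (hw : 0 < w) (hy : 0 ≤ y) :
    f w / w * y ≤ f y + f w := by
  have hfw : 0 ≤ f w / w := div_nonneg (hf.nonneg hw.le) hw.le
  rcases le_total y w with hyw | hwy
  · calc f w / w * y ≤ f w / w * w := by gcongr
      _ ≤ f y + f w := by rw [div_mul_cancel₀ _ hw.ne']; linarith [hf.nonneg hy]
  · calc f w / w * y ≤ f y / y * y := by gcongr ?_ * _; exact hf.apply_div_le_apply_div hw hwy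
      _ ≤ f y + f w := by
        rw [div_mul_cancel₀ _ (hw.trans_le hwy).ne']; linarith [hf.nonneg hw.le]

lemma tendsto_atTop (hf : IsYoung f) : Tendsto f atTop atTop := by
  refine tendsto_atTop_mono' _ ?_ (tendsto_id.const_mul_atTop (hf.pos one_pos))
  filter_upwards [eventually_ge_atTop 1] with x hx using hf.apply_one_mul_le hx

lemma continuousOn_Ioi (hf : IsYoung f) : ContinuousOn f (Ioi 0) :=
  (hf.2.1.subset Ioi_subset_Ici_self (convex_Ioi 0)).continuousOn isOpen_Ioi

lemma exists_apply_eq (hf : IsYoung f) {t : ℝ} (ht : 0 ≤ t) : ∃ v, 0 ≤ v ∧ f v = t := by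
  rcases ht.eq_or_lt with rfl | ht
  · exact ⟨0, le_rfl, hf.2.2⟩
  have hf1 := hf.pos one_pos
  obtain ⟨δ, hδ, hfδ⟩ : ∃ δ, 0 < δ ∧ f δ ≤ t := by
    set δ := min 1 (t / f 1)
    have hδ : 0 < δ := by positivity
    have hslope := hf.apply_div_le_apply_div hδ (min_le_left 1 (t / f 1))
    rw [div_one, div_le_iff₀ hδ] at hslope
    refine ⟨δ, hδ, hslope.trans ?_⟩
    calc f 1 * δ ≤ f 1 * (t / f 1) := by gcongr; exact min_le_right _ _
      _ = t := by field_simp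
  obtain ⟨M, hM⟩ := (hf.tendsto_atTop.eventually_ge_atTop t).and (eventually_ge_atTop δ)
    |>.exists
  obtain ⟨v, hv, rfl⟩ := intermediate_value_Icc hM.2
    (hf.continuousOn_Ioi.mono fun z hz => hδ.trans_le hz.1) ⟨hfδ, hM.1⟩
  exact ⟨v, hδ.le.trans hv.1, rfl⟩

lemma exists_rightInverse (hf : IsYoung f) : ∃ g : ℝ → ℝ, ∀ t ≥ 0, 0 ≤ g t ∧ f (g t) = t := by
  choose! g hg using fun t (ht : 0 ≤ t) => hf.exists_apply_eq ht
  exact ⟨g, hg⟩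

section RightInverse

variable {g : ℝ → ℝ} (hg : ∀ t ≥ 0, 0 ≤ g t ∧ f (g t) = t)
include hg

lemma monotoneOn_rightInverse (hf : IsYoung f) : MonotoneOn g (Ici 0) := fun s hs t ht hst =>
  hf.le_of_apply_le (hg s hs).1 (hg t ht).1 (by rw [(hg s hs).2, (hg t ht).2]; exact hst)

lemma tendsto_rightInverse (hf : IsYoung f) : Tendsto g atTop atTop := by
  refine Filter.tendsto_atTop.2 fun M => ?_
  filter_upwards [eventually_ge_atTop (f (max M 0))] with t ht
  have ht0 : 0 ≤ t := (hf.nonneg (le_max_right M 0)).trans ht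
  exact (le_max_left M 0).trans <|
    hf.le_of_apply_le (le_max_right M 0) (hg t ht0).1 ((hg t ht0).2.symm ▸ ht)

end RightInverse

end IsYoung

def realLeg (f : ℝ → ℝ) (x : ℝ) : ℝ := ⨆ y : {y : ℝ // 0 ≤ y}, (x * y - f y)

section RealLegendre

variable {f : ℝ → ℝ}

lemma bddAbove_range_realLeg (hf : IsYoung f) (hsup : Tendsto (fun x => f x / x) atTop atTop)
    (x : ℝ) : BddAbove (range fun y : {y : ℝ // 0 ≤ y} => x * y - f y) := by
  obtain ⟨M, hM⟩ := eventually_atTop.1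
    ((hsup.eventually_ge_atTop x).and (eventually_gt_atTop (0 : ℝ)))
  refine ⟨|x| * max M 0, ?_⟩
  rintro _ ⟨⟨y, hy⟩, rfl⟩
  rcases le_total y (max M 0) with hyM | hMy
  · calc x * y - f y ≤ |x| * y := by nlinarith [le_abs_self x, hf.nonneg hy]
      _ ≤ |x| * max M 0 := by gcongr
  · obtain ⟨hxy, hy0⟩ := hM y ((le_max_left M 0).trans hMy)
    rw [le_div_iff₀ hy0] at hxy
    nlinarith [abs_nonneg x, le_max_right M 0]

lemma le_realLeg (hf : IsYoung f) (hsup : Tendsto (fun x => f x / x) atTop atTop) (x : ℝ)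
    {y : ℝ} (hy : 0 ≤ y) : x * y - f y ≤ realLeg f x :=
  le_ciSup (bddAbove_range_realLeg hf hsup x) ⟨y, hy⟩

lemma realLeg_le {x c : ℝ} (h : ∀ y ≥ 0, x * y - f y ≤ c) : realLeg f x ≤ c :=
  ciSup_le fun y => h y y.2

lemma leg_eq_ofReal_realLeg (hf : IsYoung f) (hsup : Tendsto (fun x => f x / x) atTop atTop)
    (x : ℝ) : Leg f x = ENNReal.ofReal (realLeg f x) :=
  (Monotone.map_ciSup_of_continuousAt ENNReal.continuous_ofReal.continuousAt
    ENNReal.ofReal_mono (bddAbove_range_realLeg hf hsup x)).symm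

lemma monotone_realLeg (hf : IsYoung f) (hsup : Tendsto (fun x => f x / x) atTop atTop) :
    Monotone (realLeg f) := fun _ x₂ hx =>
  ciSup_mono (bddAbove_range_realLeg hf hsup x₂) fun y => by gcongr; exact y.2

lemma tendsto_realLeg (hf : IsYoung f) (hsup : Tendsto (fun x => f x / x) atTop atTop) :
    Tendsto (realLeg f) atTop atTop :=
  tendsto_atTop_mono (fun x => by simp only [id]; linarith [le_realLeg hf hsup x zero_le_one])
    (tendsto_atTop_add_const_right _ (-f 1) tendsto_id)

lemma realLeg_le_mul (hf : IsYoung f) {x u : ℝ} (hx : 0 ≤ x) (hu : 0 ≤ u)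
    (hfu : f u = realLeg f x) : realLeg f x ≤ x * u := by
  by_contra! hlt
  rcases hu.eq_or_lt with rfl | hu
  · rw [← hfu, hf.2.2, mul_zero] at hlt
    exact hlt.false
  refine hlt.not_ge (realLeg_le fun v hv => ?_)
  rcases le_total v u with hvu | huv
  · nlinarith [hf.nonneg hv]
  -- past `u` the slope of `f` exceeds `f u / u > x`, so the bracket is negative
  have hslope : x < f v / v := by
    calc x < f u / u := by rw [lt_div_iff₀ hu, hfu]; linarith
      _ ≤ f v / v := hf.apply_div_le_apply_div hu huv
  rw [lt_div_iff₀ (hu.trans_le huv)] at hslope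
  nlinarith

lemma mul_le_two_mul_realLeg (hf : IsYoung f) (hsup : Tendsto (fun x => f x / x) atTop atTop)
    {x u : ℝ} (hu : 0 ≤ u) (hfu : f u = realLeg f x) : x * u ≤ 2 * realLeg f x := by
  linarith [le_realLeg hf hsup x hu]

end RealLegendre

lemma invE_le {g : ℝ → ℝ≥0∞} {t : ℝ≥0∞} {s : ℝ} (hs : 0 ≤ s) (ht : t ≤ g s) :
    invE g t ≤ ENNReal.ofReal s :=
  iInf_le (fun s : {s : ℝ // 0 ≤ s ∧ t ≤ g s} => ENNReal.ofReal s.1) ⟨s, hs, ht⟩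

lemma le_invE {g : ℝ → ℝ≥0∞} {t : ℝ≥0∞} {a : ℝ} (h : ∀ s ≥ 0, t ≤ g s → a ≤ s) :
    ENNReal.ofReal a ≤ invE g t :=
  le_iInf fun s => ENNReal.ofReal_le_ofReal (h s.1 s.2.1 s.2.2)

lemma ofReal_le_leg (f : ℝ → ℝ) {x y : ℝ} (hy : 0 ≤ y) :
    ENNReal.ofReal (x * y - f y) ≤ Leg f x :=
  le_iSup (fun z : {y : ℝ // 0 ≤ y} => ENNReal.ofReal (x * z - f z)) ⟨y, hy⟩

section InverseOfLegendre

variable {ψ : ℝ → ℝ}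

lemma invE_leg_le (hψ : IsYoung ψ) {w P : ℝ} (hw : 0 < w) (hwP : ψ w = P) {t : ℝ≥0∞}
    (ht : t ≤ ENNReal.ofReal P) : invE (Leg ψ) t ≤ ENNReal.ofReal (2 * (P / w)) := by
  subst hwP
  have hψw := hψ.nonneg hw.le
  refine invE_le (by positivity) (ht.trans ((ofReal_le_leg ψ hw.le).trans' ?_))
  exact ENNReal.ofReal_le_ofReal (by rw [mul_assoc, div_mul_cancel₀ _ hw.ne']; linarith)

lemma le_invE_leg (hψ : IsYoung ψ) {w P : ℝ} (hw : 0 < w) (hwP : ψ w = P) {t : ℝ≥0∞}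
    (ht : ENNReal.ofReal (P / 2) < t) : ENNReal.ofReal (P / w / 2) ≤ invE (Leg ψ) t := by
  subst hwP
  refine le_invE fun s hs hts => ?_
  by_contra! hlt
  have hleg : Leg ψ s ≤ ENNReal.ofReal (ψ w / 2) := iSup_le fun y =>
    ENNReal.ofReal_le_ofReal <| by
    have hy := y.2
    have hyoung := hψ.apply_div_mul_le_add hw hy
    nlinarith [hψ.nonneg hy]
  exact (ht.trans_le (hts.trans hleg)).false

end InverseOfLegendre

section MonotoneIntegral

variable {n : ℝ → ℝ}

lemma mul_le_integral_of_monotone (hn : Monotone n) {a b : ℝ} (hab : a ≤ b) :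
    (b - a) * n a ≤ ∫ t in a..b, n t := by
  simpa [mul_comm] using intervalIntegral.integral_mono_on (μ := volume) hab
    intervalIntegrable_const hn.intervalIntegrable fun t ht => hn ht.1

lemma integral_le_mul_of_monotone (hn : Monotone n) {a b : ℝ} (hab : a ≤ b) :
    ∫ t in a..b, n t ≤ (b - a) * n b := by
  simpa [mul_comm] using intervalIntegral.integral_mono_on (μ := volume) hab
    hn.intervalIntegrable intervalIntegrable_const fun t ht => hn ht.2

lemma integral_sub_integral_of_monotone (hn : Monotone n) (a b : ℝ) :
    (∫ t in (0 : ℝ)..b, n t) - ∫ t in (0 : ℝ)..a, n t = ∫ t in a..b, n t :=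
  intervalIntegral.integral_interval_sub_left hn.intervalIntegrable hn.intervalIntegrable

lemma isYoung_integral_of_monotone (hn : Monotone n) (hpos : ∀ t, 0 < n t) :
    IsYoung fun x => ∫ t in (0 : ℝ)..x, n t := by
  refine ⟨fun a _ b _ hab => ?_, ?_, intervalIntegral.integral_same⟩
  · rw [← sub_pos, integral_sub_integral_of_monotone hn]
    exact (mul_pos (sub_pos.2 hab) (hpos a)).trans_le (mul_le_integral_of_monotone hn hab.le)
  refine convexOn_of_slope_mono_adjacent (convex_Ici 0) fun {x y z} _ _ hxy hyz => ?_
  simp only [integral_sub_integral_of_monotone hn]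
  calc (∫ t in x..y, n t) / (y - x) ≤ n y := by
        rw [div_le_iff₀ (sub_pos.2 hxy), mul_comm]
        exact integral_le_mul_of_monotone hn hxy.le
    _ ≤ (∫ t in y..z, n t) / (z - y) := by
        rw [le_div_iff₀ (sub_pos.2 hyz), mul_comm]
        exact mul_le_integral_of_monotone hn hyz.le

lemma integral_le_mul_self_of_monotone (hn : Monotone n) {x : ℝ} (hx : 0 ≤ x) :
    ∫ t in (0 : ℝ)..x, n t ≤ x * n x := by
  simpa using integral_le_mul_of_monotone hn hx

lemma mul_le_integral_two_mul_of_monotone (hn : Monotone n) (hn0 : 0 ≤ n 0) {x : ℝ}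
    (hx : 0 ≤ x) : x * n x ≤ ∫ t in (0 : ℝ)..(2 * x), n t := by
  have hsplit := integral_sub_integral_of_monotone hn x (2 * x)
  have hfirst := mul_le_integral_of_monotone hn hx
  have hsecond := mul_le_integral_of_monotone hn (show x ≤ 2 * x by linarith)
  nlinarith

end MonotoneIntegral

lemma exists_monotone_between_of_le_mul {r : ℝ → ℝ} {K x₀ : ℝ} (hpos : 0 < r x₀)
    (hK : ∀ s t, x₀ ≤ s → s ≤ t → r s ≤ K * r t) :
    ∃ n : ℝ → ℝ, Monotone n ∧ (∀ t, 0 < n t) ∧ ∀ t ≥ x₀, r t ≤ n t ∧ n t ≤ K * r t := by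
  have hmem : ∀ t, r x₀ ∈ r '' Icc x₀ (max t x₀) := fun t =>
    mem_image_of_mem r ⟨le_rfl, le_max_right t x₀⟩
  have hbdd : ∀ t, BddAbove (r '' Icc x₀ (max t x₀)) := fun t =>
    ⟨_, by rintro _ ⟨s, hs, rfl⟩; exact hK s _ hs.1 hs.2⟩
  refine ⟨fun t => sSup (r '' Icc x₀ (max t x₀)), fun t₁ t₂ ht => ?_,
    fun t => hpos.trans_le (le_csSup (hbdd t) (hmem t)), fun t ht => ⟨?_, ?_⟩⟩
  · exact csSup_le_csSup (hbdd t₂) ⟨_, hmem t₁⟩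
      (image_mono (Icc_subset_Icc le_rfl (max_le_max ht le_rfl)))
  · exact le_csSup (hbdd t) (mem_image_of_mem r ⟨ht, le_max_left t x₀⟩)
  · refine csSup_le ⟨_, hmem t⟩ ?_
    rintro _ ⟨s, hs, rfl⟩
    exact hK s t hs.1 (hs.2.trans_eq (max_eq_left ht))

lemma exists_isYoung_of_le_mul {m : ℝ → ℝ} {K x₀ : ℝ} (hx₀ : 0 < x₀) (hpos : 0 < m x₀)
    (hK : ∀ s t, x₀ ≤ s → s ≤ t → m s / s ≤ K * (m t / t)) :
    ∃ Y, IsYoung Y ∧ ∀ x ≥ x₀, Y x ≤ K * m x ∧ m x ≤ Y (2 * x) := by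
  obtain ⟨n, hn, hnpos, hnr⟩ := exists_monotone_between_of_le_mul (r := fun x => m x / x)
    (div_pos hpos hx₀) hK
  refine ⟨_, isYoung_integral_of_monotone hn hnpos, fun x hx => ?_⟩
  have hx0 : 0 < x := hx₀.trans_le hx
  have hmx : m x = x * (m x / x) := by field_simp
  constructor
  · calc ∫ t in (0 : ℝ)..x, n t ≤ x * n x := integral_le_mul_self_of_monotone hn hx0.le
      _ ≤ x * (K * (m x / x)) := by gcongr; exact (hnr x hx).2
      _ = K * m x := by field_simp
  · calc m x = x * (m x / x) := hmx
      _ ≤ x * n x := by gcongr; exact (hnr x hx).1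
      _ ≤ ∫ t in (0 : ℝ)..(2 * x), n t :=
        mul_le_integral_two_mul_of_monotone hn (hnpos 0).le hx0.le

lemma IsYoung.div_le_mul_div {G : ℝ → ℝ} (hG : IsYoung G) {α β a₁ a₂ b₁ b₂ : ℝ} (hα : 1 ≤ α)
    (hβ : 1 ≤ β) (ha₁ : 0 < a₁) (ha : a₁ ≤ a₂) (hb₁ : 0 < b₁) (hb₂ : 0 < b₂)
    (h₁ : a₁ ≤ α * G (α * b₁)) (h₂ : G (b₂ / β) ≤ β * a₂) :
    a₁ / b₁ ≤ (α * β) ^ 2 * (a₂ / b₂) := by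
  have hα0 : 0 < α := one_pos.trans_le hα
  have hβ0 : 0 < β := one_pos.trans_le hβ
  -- compare the slopes of `G` at `p ≤ α b₁` and `q ≥ b₂ / β`, where `G p = a₁ / α ≤ β a₂ = G q`
  obtain ⟨p, hp0, hGp⟩ := hG.exists_apply_eq (div_pos ha₁ hα0).le
  have hβa₂ : 0 < β * a₂ := mul_pos hβ0 (ha₁.trans_le ha)
  obtain ⟨q, hq0, hGq⟩ := hG.exists_apply_eq hβa₂.le
  have hp : 0 < p := hp0.lt_of_ne <| by
    rintro rfl
    exact (div_pos ha₁ hα0).ne' (hGp ▸ hG.2.2)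
  have hpb : p ≤ α * b₁ := hG.le_of_apply_le hp0 (by positivity) <| by
    rw [hGp, div_le_iff₀ hα0, mul_comm]; exact h₁
  have hbq : b₂ / β ≤ q := hG.le_of_apply_le (by positivity) hq0 (hGq ▸ h₂)
  have hpq : p ≤ q := hG.le_of_apply_le hp0 hq0 <| by
    rw [hGp, hGq]
    calc a₁ / α ≤ a₁ := div_le_self ha₁.le hα
      _ ≤ β * a₂ := ha.trans (le_mul_of_one_le_left (ha₁.le.trans ha) hβ)
  have hslope := hG.apply_div_le_apply_div hp hpq
  rw [hGp, hGq] at hslope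
  calc a₁ / b₁ ≤ a₁ / (p / α) := by gcongr; rwa [div_le_iff₀ hα0, mul_comm]
    _ = α ^ 2 * (a₁ / α / p) := by field_simp
    _ ≤ α ^ 2 * (β * a₂ / q) := by gcongr
    _ ≤ α ^ 2 * (β * a₂ / (b₂ / β)) := by gcongr
    _ = (α * β) ^ 2 * (a₂ / b₂) := by field_simp

lemma DominR.exists_one_le {f g : ℝ → ℝ} (hfg : DominR f g) (hg : MonotoneOn g (Ici 0))
    (hg0 : ∀ x ≥ 0, 0 ≤ g x) : ∃ C, 1 ≤ C ∧ ∀ᶠ x in atTop, f x ≤ C * g (C * x) := by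
  obtain ⟨C₁, C₂, x₀, hC₁, hC₂, hx₀, hdom⟩ := hfg
  set C := max (max C₁ C₂) 1
  have hC₁C : C₁ ≤ C := (le_max_left _ _).trans (le_max_left _ _)
  have hC₂C : C₂ ≤ C := (le_max_right _ _).trans (le_max_left _ _)
  refine ⟨C, le_max_right _ _, ?_⟩
  filter_upwards [eventually_ge_atTop x₀] with x hx
  have hx0 : 0 ≤ x := hx₀.le.trans hx
  calc f x ≤ C₁ * g (C₂ * x) := hdom x hx
    _ ≤ C * g (C * x) := by
      gcongr
      · exact hg0 _ (by positivity)
      · exact hg (show 0 ≤ C₂ * x by positivity) (show 0 ≤ C * x by positivity) (by gcongr)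

lemma exists_realLeg_div_quasiMonotone {φ ψ φinv ψinv G : ℝ → ℝ} (hφ : IsYoung φ)
    (hψ : IsYoung ψ) (hsup : Tendsto (fun x => φ x / x) atTop atTop)
    (hφinv : ∀ t ≥ 0, 0 ≤ φinv t ∧ φ (φinv t) = t)
    (hψinv : ∀ t ≥ 0, 0 ≤ ψinv t ∧ ψ (ψinv t) = t)
    (hG : IsYoung G) (hequiv : EquivR (fun x => φinv (ψ x)) G) :
    ∃ K x₀, 1 ≤ K ∧ 0 < x₀ ∧ (∀ x ≥ x₀, 0 < realLeg φ x ∧ 0 < ψinv (realLeg φ x)) ∧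
      ∀ s t, x₀ ≤ s → s ≤ t →
        realLeg φ s / ψinv (realLeg φ s) / s ≤ K * (realLeg φ t / ψinv (realLeg φ t) / t) := by
  set Φ := realLeg φ
  set w := fun x => ψinv (Φ x)
  have hφinv_mono := hφ.monotoneOn_rightInverse hφinv
  obtain ⟨α, hα, h₁⟩ := hequiv.1.exists_one_le hG.1.monotoneOn fun x hx => hG.nonneg hx
  obtain ⟨β, hβ, h₂⟩ := hequiv.2.exists_one_le
    (fun x hx y hy hxy => hφinv_mono (hψ.nonneg hx) (hψ.nonneg hy) (hψ.mono hx hxy))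
    fun x hx => (hφinv _ (hψ.nonneg hx)).1
  have hΦ : Tendsto Φ atTop atTop := tendsto_realLeg hφ hsup
  have hw : Tendsto w atTop atTop := (hψ.tendsto_rightInverse hψinv).comp hΦ
  obtain ⟨x₀, hx₀⟩ := eventually_atTop.1 <| (eventually_gt_atTop 0).and <|
    (hΦ.eventually_gt_atTop 0).and <| (hw.eventually_gt_atTop 0).and <|
      (hw.eventually h₁).and ((hw.atTop_div_const (one_pos.trans_le hβ)).eventually h₂)
  refine ⟨2 * (α * β) ^ 2, x₀, by nlinarith [one_le_mul_of_one_le_of_one_le hα hβ],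
    (hx₀ x₀ le_rfl).1, fun x hx => ⟨(hx₀ x hx).2.1, (hx₀ x hx).2.2.1⟩, fun s t hs hst => ?_⟩
  obtain ⟨hs0, hΦs, hws, hαs, -⟩ := hx₀ s hs
  obtain ⟨ht0, hΦt, hwt, -, hβt⟩ := hx₀ t (hs.trans hst)
  have hψw : ∀ x, 0 < Φ x → ψ (w x) = Φ x := fun x hx => (hψinv _ hx.le).2
  simp only [hψw s hΦs] at hαs
  simp only [mul_div_cancel₀ _ (one_pos.trans_le hβ).ne', hψw t hΦt] at hβt
  have hus : 0 < φinv (Φ s) := (hφinv _ hΦs.le).1.lt_of_ne fun h =>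
    hΦs.ne (by rw [← (hφinv _ hΦs.le).2, ← h, hφ.2.2])
  have hu : φinv (Φ s) ≤ φinv (Φ t) :=
    hφinv_mono hΦs.le hΦt.le (monotone_realLeg hφ hsup hst)
  calc Φ s / w s / s ≤ φinv (Φ s) / w s := by
        rw [div_right_comm]
        gcongr
        rw [div_le_iff₀ hs0, mul_comm]
        exact realLeg_le_mul hφ hs0.le hus.le (hφinv _ hΦs.le).2
    _ ≤ (α * β) ^ 2 * (φinv (Φ t) / w t) := hG.div_le_mul_div hα hβ hus hu hws hwt hαs hβt
    _ ≤ (α * β) ^ 2 * (2 * Φ t / t / w t) := by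
        gcongr
        rw [le_div_iff₀ ht0, mul_comm]
        exact mul_le_two_mul_realLeg hφ hsup (hφinv _ hΦt.le).1 (hφinv _ hΦt.le).2
    _ = 2 * (α * β) ^ 2 * (Φ t / w t / t) := by ring

/-- If φ⁻¹ ∘ ψ is equivalent to a Young function then so is (ψ*)⁻¹ ∘ φ*. -/
theorem stmt6 (φ ψ φinv : ℝ → ℝ) (hφ : IsYoung φ) (hψ : IsYoung ψ)
    (hsup : Tendsto (fun x => φ x / x) atTop atTop)
    (hinv : ∀ x ≥ (0:ℝ), 0 ≤ φinv x ∧ φ (φinv x) = x)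
    (h : ∃ Y, IsYoung Y ∧ EquivR (fun x => φinv (ψ x)) Y) :
    ∃ Y, IsYoung Y ∧
      (∃ C₁ C₂ x₀ : ℝ, 0 < C₁ ∧ 0 < C₂ ∧ 0 < x₀ ∧ ∀ x ≥ x₀,
        invE (Leg ψ) (Leg φ x) ≤ ENNReal.ofReal (C₁ * Y (C₂ * x)) ∧
        ENNReal.ofReal (Y x) ≤ ENNReal.ofReal C₁ * invE (Leg ψ) (Leg φ (C₂ * x))) := by
  obtain ⟨G, hG, hequiv⟩ := h
  obtain ⟨ψinv, hψinv⟩ := hψ.exists_rightInverse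
  obtain ⟨K, x₀, hK, hx₀, hpos, hquasi⟩ :=
    exists_realLeg_div_quasiMonotone hφ hψ hsup hinv hψinv hG hequiv
  obtain ⟨Y, hY, hYm⟩ :=
    exists_isYoung_of_le_mul (m := fun x => realLeg φ x / ψinv (realLeg φ x)) hx₀
      (div_pos (hpos x₀ le_rfl).1 (hpos x₀ le_rfl).2) hquasi
  refine ⟨Y, hY, 2 * K, 2, x₀, by positivity, two_pos, hx₀, fun x hx => ?_⟩
  obtain ⟨hΦ, hw⟩ := hpos x hx
  have hψw := (hψinv _ hΦ.le).2
  obtain ⟨hYle, hleY⟩ := hYm x hx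
  constructor
  · calc invE (Leg ψ) (Leg φ x) ≤ ENNReal.ofReal (2 * (realLeg φ x / ψinv (realLeg φ x))) :=
          invE_leg_le hψ hw hψw (leg_eq_ofReal_realLeg hφ hsup x).le
      _ ≤ ENNReal.ofReal (2 * K * Y (2 * x)) := ENNReal.ofReal_le_ofReal <| by
          nlinarith [hY.nonneg (by linarith : (0 : ℝ) ≤ 2 * x)]
  · have hlt : ENNReal.ofReal (realLeg φ x / 2) < Leg φ (2 * x) := by
      have hmono := monotone_realLeg hφ hsup (show x ≤ 2 * x by linarith)
      rw [leg_eq_ofReal_realLeg hφ hsup, ENNReal.ofReal_lt_ofReal_iff']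
      constructor <;> linarith
    calc ENNReal.ofReal (Y x)
        ≤ ENNReal.ofReal (2 * K) * ENNReal.ofReal (realLeg φ x / ψinv (realLeg φ x) / 2) := by
          rw [← ENNReal.ofReal_mul (by positivity)]
          exact ENNReal.ofReal_le_ofReal (by linarith)
      _ ≤ ENNReal.ofReal (2 * K) * invE (Leg ψ) (Leg φ (2 * x)) := by
          gcongr
          exact le_invE_leg hψ hw hψw hlt
end
end

section
/- Let ζ, ψ, κ, ϑ be as follows: ζ and ψ are Young functions, ψ̃(x) = ψ(x)/x is strictly increasing from 0 to ∞, κ^{-1}(x) = ζ^{-1}(x)ψ̃^{-1}(x), and ϑ = κ^{-1} ∘ ψ̃. Then the function ζ̃ = κ ∘ ϑ* is equivalent to ζ, i.e., there exists K such that ζ̃(K^{-1}x) ≤ ζ(x) ≤ ζ̃(2x) for all sufficiently large x. -/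
open Filter Topology MeasureTheory
open scoped ENNReal
noncomputable section

/-! Put `t = ψ̃⁻¹(ζ x)`, so that `κ⁻¹(ζ x) = ζ⁻¹(ζ x) · t = x t`. Since `ϑ y = ζ⁻¹(ψ̃ y) · y`,
the Legendre transform satisfies `ϑ*(x) ≤ x t` (the terms with `y < t` are at most `x t`, and those
with `y ≥ t` have `ζ⁻¹(ψ̃ y) ≥ x`), while testing `y = t` gives `ϑ*(2x) ≥ 2 x t - ϑ t = x t`.
Applying the increasing function `κ`, whose value at `x t` is `ζ x`, gives both inequalities. -/

section Inverses

variable {f g : ℝ → ℝ}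

lemma MonotoneOn.nonneg_of_map_zero (hf : MonotoneOn f (Set.Ici 0)) (h0 : f 0 = 0) {x : ℝ}
    (hx : 0 ≤ x) : 0 ≤ f x :=
  h0 ▸ hf (Set.mem_Ici.mpr le_rfl) (Set.mem_Ici.mpr hx) hx

variable (hf : StrictMonoOn f (Set.Ici 0)) (hg : ∀ x ≥ (0 : ℝ), 0 ≤ g x ∧ f (g x) = x)
include hf hg

lemma StrictMonoOn.rightInv_apply_apply {x : ℝ} (hx : 0 ≤ x) (hfx : 0 ≤ f x) : g (f x) = x :=
  hf.injOn (Set.mem_Ici.mpr (hg _ hfx).1) (Set.mem_Ici.mpr hx) (hg _ hfx).2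

lemma StrictMonoOn.strictMonoOn_rightInv : StrictMonoOn g (Set.Ici 0) := by
  intro a ha b hb hab
  have hfg : f (g a) < f (g b) := by rwa [(hg a ha).2, (hg b hb).2]
  exact (hf.lt_iff_lt (Set.mem_Ici.mpr (hg a ha).1) (Set.mem_Ici.mpr (hg b hb).1)).mp hfg

end Inverses

lemma StrictMonoOn.mul_of_nonneg {f g : ℝ → ℝ} (hf : StrictMonoOn f (Set.Ici 0))
    (hg : StrictMonoOn g (Set.Ici 0)) (hf0 : ∀ x ≥ (0 : ℝ), 0 ≤ f x)
    (hg0 : ∀ x ≥ (0 : ℝ), 0 ≤ g x) : StrictMonoOn (fun x => f x * g x) (Set.Ici 0) :=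
  fun _ ha _ hb hab => mul_lt_mul'' (hf ha hb hab) (hg ha hb hab) (hf0 _ ha) (hg0 _ ha)

lemma extE_le_ofReal {κ : ℝ → ℝ} (hκ : MonotoneOn κ (Set.Ici 0)) {t : ℝ≥0∞} {c : ℝ}
    (hc : 0 ≤ c) (htc : t ≤ ENNReal.ofReal c) : extE κ t ≤ ENNReal.ofReal (κ c) :=
  iSup_le fun ⟨_, hs, hst⟩ => ENNReal.ofReal_le_ofReal <|
    hκ hs hc ((ENNReal.ofReal_le_ofReal_iff hc).mp (hst.trans htc))

lemma ofReal_le_extE (κ : ℝ → ℝ) {t : ℝ≥0∞} {c : ℝ} (hc : 0 ≤ c) (hct : ENNReal.ofReal c ≤ t) :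
    ENNReal.ofReal (κ c) ≤ extE κ t :=
  le_iSup_of_le (⟨c, hc, hct⟩ : {s : ℝ // 0 ≤ s ∧ ENNReal.ofReal s ≤ t}) le_rfl

lemma mul_sub_mul_le_mul {x y t u : ℝ} (hx : 0 ≤ x) (hy : 0 ≤ y) (ht : 0 ≤ t) (hu : 0 ≤ u)
    (hyt : u < x → y < t) : x * y - u * y ≤ x * t := by
  rcases le_or_gt x u with hxu | hux
  · nlinarith
  · nlinarith [hyt hux]

section Legendre

variable {ζ ζinv θ θinv ϑ : ℝ → ℝ} (hζ : StrictMonoOn ζ (Set.Ici 0))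
  (hζinv : ∀ x ≥ (0 : ℝ), 0 ≤ ζinv x ∧ ζ (ζinv x) = x)
  (hθinv : ∀ x ≥ (0 : ℝ), 0 ≤ θinv x ∧ θ (θinv x) = x)
  (hϑ : ∀ y ≥ (0 : ℝ), ϑ y = ζinv (θ y) * y)
include hζ hζinv hθinv hϑ

lemma Leg_le_mul_rightInv_apply (hθ : StrictMonoOn θ (Set.Ici 0))
    (hθ0 : ∀ y ≥ (0 : ℝ), 0 ≤ θ y) {x : ℝ} (hx : 0 ≤ x) (hζx : 0 ≤ ζ x) :
    Leg ϑ x ≤ ENNReal.ofReal (x * θinv (ζ x)) := by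
  obtain ⟨ht, hθt⟩ := hθinv (ζ x) hζx
  refine iSup_le fun ⟨y, hy⟩ => ENNReal.ofReal_le_ofReal ?_
  rw [hϑ y hy]
  obtain ⟨hu, hζu⟩ := hζinv (θ y) (hθ0 y hy)
  refine mul_sub_mul_le_mul hx hy ht hu fun hux => ?_
  have hθyt : θ y < θ (θinv (ζ x)) := by
    rw [hθt, ← hζu]
    exact hζ hu hx hux
  exact (hθ.lt_iff_lt (Set.mem_Ici.mpr hy) (Set.mem_Ici.mpr ht)).mp hθyt

lemma mul_rightInv_apply_le_Leg {x : ℝ} (hx : 0 ≤ x) (hζx : 0 ≤ ζ x) :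
    ENNReal.ofReal (x * θinv (ζ x)) ≤ Leg ϑ (2 * x) := by
  obtain ⟨ht, hθt⟩ := hθinv (ζ x) hζx
  have hϑt : ϑ (θinv (ζ x)) = x * θinv (ζ x) := by
    rw [hϑ _ ht, hθt, hζ.rightInv_apply_apply hζinv hx hζx]
  refine le_iSup_of_le (⟨θinv (ζ x), ht⟩ : {y : ℝ // 0 ≤ y}) (ENNReal.ofReal_le_ofReal ?_)
  linarith

end Legendre

theorem stmt8_general (ζ ψ ζinv tψinv κ κinv : ℝ → ℝ)
    (hζ : IsYoung ζ)
    (htψ : StrictMonoOn (fun x => ψ x / x) (Set.Ici 0))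
    (htψ0 : ψ 0 / 0 = 0)
    (hζinv : ∀ x ≥ (0:ℝ), 0 ≤ ζinv x ∧ ζ (ζinv x) = x)
    (htinv : ∀ x ≥ (0:ℝ), 0 ≤ tψinv x ∧ ψ (tψinv x) / tψinv x = x)
    (hκinv : ∀ x ≥ (0:ℝ), κinv x = ζinv x * tψinv x)
    (hκ : ∀ x ≥ (0:ℝ), 0 ≤ κ x ∧ κinv (κ x) = x ∧ κ (κinv x) = x) :
    ∃ K x₀ : ℝ, 0 < K ∧ 0 < x₀ ∧ ∀ x ≥ x₀,
      extE κ (Leg (fun t => κinv (ψ t / t)) (K⁻¹ * x)) ≤ ENNReal.ofReal (ζ x) ∧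
      ENNReal.ofReal (ζ x) ≤ extE κ (Leg (fun t => κinv (ψ t / t)) (2 * x)) := by
  obtain ⟨hζmono, -, hζ0⟩ := hζ
  have htψnn : ∀ y ≥ (0:ℝ), 0 ≤ ψ y / y := fun y hy =>
    htψ.monotoneOn.nonneg_of_map_zero htψ0 hy
  have hϑ : ∀ y ≥ (0:ℝ), κinv (ψ y / y) = ζinv (ψ y / y) * y := fun y hy => by
    rw [hκinv _ (htψnn y hy), htψ.rightInv_apply_apply htinv hy (htψnn y hy)]
  have hκinvmono : StrictMonoOn κinv (Set.Ici 0) :=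
    (StrictMonoOn.mul_of_nonneg (hζmono.strictMonoOn_rightInv hζinv)
      (htψ.strictMonoOn_rightInv htinv) (fun x hx => (hζinv x hx).1)
      (fun x hx => (htinv x hx).1)).congr fun x hx => (hκinv x hx).symm
  have hκmono : MonotoneOn κ (Set.Ici 0) :=
    (hκinvmono.strictMonoOn_rightInv fun x hx => ⟨(hκ x hx).1, (hκ x hx).2.1⟩).monotoneOn
  refine ⟨1, 1, one_pos, one_pos, fun x hx => ?_⟩
  have hx0 : 0 ≤ x := zero_le_one.trans hx
  have hζx : 0 ≤ ζ x := hζmono.monotoneOn.nonneg_of_map_zero hζ0 hx0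
  have hc0 : 0 ≤ x * tψinv (ζ x) := mul_nonneg hx0 (htinv _ hζx).1
  have hκinvζ : κinv (ζ x) = x * tψinv (ζ x) := by
    rw [hκinv _ hζx, hζmono.rightInv_apply_apply hζinv hx0 hζx]
  have hκc : κ (x * tψinv (ζ x)) = ζ x := hκinvζ ▸ (hκ _ hζx).2.2
  rw [inv_one, one_mul, ← hκc]
  exact ⟨extE_le_ofReal hκmono hc0
      (Leg_le_mul_rightInv_apply hζmono hζinv htinv hϑ htψ htψnn hx0 hζx),
    ofReal_le_extE κ hc0 (mul_rightInv_apply_le_Leg hζmono hζinv htinv hϑ hx0 hζx)⟩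

/-- The function ζ̃ = κ ∘ ϑ* is equivalent to ζ: ζ̃(K⁻¹x) ≤ ζ(x) ≤ ζ̃(2x) for large x. -/
theorem stmt8 (ζ ψ ζinv tψinv κ κinv : ℝ → ℝ)
    (hζ : IsYoung ζ) (hψ : IsYoung ψ)
    (htψ : StrictMonoOn (fun x => ψ x / x) (Set.Ici 0))
    (htψ0 : ψ 0 / 0 = 0)
    (htψi : Tendsto (fun x => ψ x / x) atTop atTop)
    (hζinv : ∀ x ≥ (0:ℝ), 0 ≤ ζinv x ∧ ζ (ζinv x) = x)
    (htinv : ∀ x ≥ (0:ℝ), 0 ≤ tψinv x ∧ ψ (tψinv x) / tψinv x = x)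
    (hκinv : ∀ x ≥ (0:ℝ), κinv x = ζinv x * tψinv x)
    (hκ : ∀ x ≥ (0:ℝ), 0 ≤ κ x ∧ κinv (κ x) = x ∧ κ (κinv x) = x) :
    ∃ K x₀ : ℝ, 0 < K ∧ 0 < x₀ ∧ ∀ x ≥ x₀,
      extE κ (Leg (fun t => κinv (ψ t / t)) (K⁻¹ * x)) ≤ ENNReal.ofReal (ζ x) ∧
      ENNReal.ofReal (ζ x) ≤ extE κ (Leg (fun t => κinv (ψ t / t)) (2 * x)) :=
  stmt8_general ζ ψ ζinv tψinv κ κinv hζ htψ htψ0 hζinv htinv hκinv hκ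
end
end

section
/- If φ(x) = x^p and ψ(x) = x^r with r > p ≥ 1, then the function ρ(x) = sup_{y ≥ 0} (φ(xy) − ψ(y))/y is equivalent to x ↦ x^{p(r−1)/(r−p)}. -/
open Filter Topology MeasureTheory
open scoped ENNReal
noncomputable section

/-
Substituting `y = s t` with `s = x^(p/(r-p))` turns `((x y)^p - y^r)/y` into
`x^(p(r-1)/(r-p)) · (t^p - t^r)/t`, so `ρ(x) = x^(p(r-1)/(r-p)) · ρ(1)` exactly for `x > 0`.
It remains to see `0 < ρ(1) < ∞`: the integrand is positive at `t = 1/2` since `p < r`,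
and at most `1` since `t^p ≤ t` for `t ≤ 1` and `t^p ≤ t^r` for `t ≥ 1`.
-/

lemma equivE_of_eventually_eq_mul_const {f g : ℝ → ℝ≥0∞} {c : ℝ≥0∞} (hc₀ : c ≠ 0)
    (hc : c ≠ ∞) (h : ∀ᶠ x in atTop, f x = g x * c) : EquivE f g := by
  obtain ⟨a, ha⟩ := eventually_atTop.1 h
  have hx₀ : ∀ x ≥ max a 1, f x = g x * c := fun x hx => ha x (le_of_max_le_left hx)
  refine ⟨⟨c.toReal, 1, max a 1, ENNReal.toReal_pos hc₀ hc, one_pos,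
    lt_max_of_lt_right one_pos, fun x hx => ?_⟩,
    ⟨c.toReal⁻¹, 1, max a 1, inv_pos.2 (ENNReal.toReal_pos hc₀ hc), one_pos,
    lt_max_of_lt_right one_pos, fun x hx => ?_⟩⟩
  · rw [one_mul, ENNReal.ofReal_toReal hc, hx₀ x hx, mul_comm]
  · rw [one_mul, hx₀ x hx, ENNReal.ofReal_inv_of_pos (ENNReal.toReal_pos hc₀ hc),
      ENNReal.ofReal_toReal hc, mul_left_comm, ENNReal.inv_mul_cancel hc₀ hc, mul_one]

lemma rpow_sub_rpow_div_mul_scale {p r x s y : ℝ} (hx : 0 ≤ x) (hs : 0 < s) (hy : 0 ≤ y)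
    (hxs : (x * s) ^ p = s ^ r) :
    ((x * (s * y)) ^ p - (s * y) ^ r) / (s * y) = s ^ (r - 1) * ((y ^ p - y ^ r) / y) := by
  rw [← mul_assoc, Real.mul_rpow (mul_nonneg hx hs.le) hy, Real.mul_rpow hs.le hy, hxs,
    Real.rpow_sub_one hs.ne', ← mul_sub, mul_div_mul_comm]

lemma rhoSup_rpow_eq_rpow_mul {p r x : ℝ} (hpr : p ≠ r) (hx : 0 < x) :
    rhoSup (fun t => t ^ p) (fun t => t ^ r) x =
      ENNReal.ofReal (x ^ (p * (r - 1) / (r - p))) *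
        rhoSup (fun t => t ^ p) (fun t => t ^ r) 1 := by
  have hrp : r - p ≠ 0 := sub_ne_zero.2 hpr.symm
  set s := x ^ (p / (r - p)) with hs_def
  have hs : 0 < s := Real.rpow_pos_of_pos hx _
  have hs_pow (q : ℝ) : s ^ q = x ^ (p * q / (r - p)) := by
    rw [hs_def, ← Real.rpow_mul hx.le]; ring_nf
  have hxs : (x * s) ^ p = s ^ r := by
    rw [Real.mul_rpow hx.le hs.le, hs_pow, hs_pow, ← Real.rpow_add hx]
    congr 1; field_simp; ring
  have hscale : Function.Surjective
      fun t : {t : ℝ // 0 ≤ t} => (⟨s * t, mul_nonneg hs.le t.2⟩ : {y : ℝ // 0 ≤ y}) :=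
    fun y => ⟨⟨y / s, div_nonneg y.2 hs.le⟩, Subtype.ext (mul_div_cancel₀ _ hs.ne')⟩
  unfold rhoSup
  rw [← hscale.iSup_comp, ENNReal.mul_iSup]
  refine iSup_congr fun t => ?_
  rw [rpow_sub_rpow_div_mul_scale hx.le hs t.2 hxs, ENNReal.ofReal_mul (by positivity), hs_pow,
    one_mul, mul_div_assoc]

lemma rhoSup_rpow_one_pos {p r : ℝ} (hpr : p < r) :
    0 < rhoSup (fun t => t ^ p) (fun t => t ^ r) 1 := by
  have hhalf : (0 : ℝ) < ((1 / 2 : ℝ) ^ p - (1 / 2 : ℝ) ^ r) / (1 / 2) :=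
    div_pos (sub_pos.2 (Real.rpow_lt_rpow_of_exponent_gt (by norm_num) (by norm_num) hpr))
      (by norm_num)
  refine (ENNReal.ofReal_pos.2 hhalf).trans_le ?_
  exact le_iSup_of_le (⟨1 / 2, by norm_num⟩ : {y : ℝ // 0 ≤ y}) (by rw [one_mul])

lemma rpow_sub_rpow_div_le_one {p r t : ℝ} (hp : 1 ≤ p) (hpr : p ≤ r) (ht : 0 ≤ t) :
    (t ^ p - t ^ r) / t ≤ 1 := by
  rcases ht.eq_or_lt with rfl | ht
  · simp
  rw [div_le_one ht]
  rcases le_total t 1 with ht1 | ht1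
  · have htp : t ^ p ≤ t := by
      simpa only [Real.rpow_one] using Real.rpow_le_rpow_of_exponent_ge ht ht1 hp
    linarith [Real.rpow_nonneg ht.le r]
  · linarith [Real.rpow_le_rpow_of_exponent_le ht1 hpr]

lemma rhoSup_rpow_one_le_one {p r : ℝ} (hp : 1 ≤ p) (hpr : p ≤ r) :
    rhoSup (fun t => t ^ p) (fun t => t ^ r) 1 ≤ 1 :=
  iSup_le fun t => ENNReal.ofReal_le_one.2 <| by
    simpa only [one_mul] using rpow_sub_rpow_div_le_one hp hpr t.2

/-- If φ(x) = x^p and ψ(x) = x^r with r > p ≥ 1 then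
ρ(x) ≃ x^(p(r−1)/(r−p)). -/
theorem stmt9 (p r : ℝ) (hp : 1 ≤ p) (hr : p < r) :
    EquivE (rhoSup (fun t => t ^ p) (fun t => t ^ r))
      (fun x => ENNReal.ofReal (x ^ (p * (r - 1) / (r - p)))) := by
  refine equivE_of_eventually_eq_mul_const (rhoSup_rpow_one_pos hr).ne'
    (ne_top_of_le_ne_top ENNReal.one_ne_top (rhoSup_rpow_one_le_one hp hr.le)) ?_
  filter_upwards [eventually_gt_atTop 0] with x hx
  exact rhoSup_rpow_eq_rpow_mul hr.ne hx
end
end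

section
/- If φ(x) = x^p (p ≥ 1) and ψ(x) = exp(x^β) − 1 (β > 0), then ρ(x) = sup_{y ≥ 0} (φ(xy) − ψ(y))/y is equivalent to x ↦ x^p (log x)^{(p−1)/β} for large x. -/
open Filter Topology MeasureTheory
open scoped ENNReal
noncomputable section

/-!
Write `L = log x`. For `y ^ β ≤ 2p L` the term `ψ(y)` can be dropped, leaving
`x ^ p y ^ (p - 1) ≤ (2p) ^ ((p-1)/β) x ^ p L ^ ((p-1)/β)`. For `y ^ β ≥ 2p L` the numerator
is nonpositive: with `u = y ^ β` one has `x ^ p ≤ exp (u/2)` and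
`y ^ p = u ^ (p/β) ≤ exp (u/2) - 1` once `u` is large. Conversely, the single choice `y = L ^ (1/β)` gives `ψ(y) = x - 1`, which is
negligible against `φ(xy) = x ^ p L ^ (p/β)`, so `ρ(x) ≥ x ^ p L ^ ((p-1)/β) / 2`.
-/

open Filter Topology Real

lemma DominE.of_eventually_le {f g : ℝ → ℝ≥0∞} {C : ℝ} (hC : 0 < C)
    (h : ∀ᶠ x in atTop, f x ≤ ENNReal.ofReal C * g x) : DominE f g := by
  obtain ⟨x₀, hx₀⟩ := eventually_atTop.1 h
  exact ⟨C, 1, max x₀ 1, hC, one_pos, by positivity,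
    fun x hx => by simpa using hx₀ x (le_of_max_le_left hx)⟩

lemma rhoSup_le_ofReal {φ ψ : ℝ → ℝ} {x M : ℝ}
    (h : ∀ y, 0 ≤ y → (φ (x * y) - ψ y) / y ≤ M) : rhoSup φ ψ x ≤ ENNReal.ofReal M :=
  iSup_le fun y => ENNReal.ofReal_le_ofReal (h y y.2)

lemma ofReal_le_rhoSup (φ ψ : ℝ → ℝ) {x y : ℝ} (hy : 0 ≤ y) :
    ENNReal.ofReal ((φ (x * y) - ψ y) / y) ≤ rhoSup φ ψ x :=
  le_iSup (fun y : {y : ℝ // 0 ≤ y} => ENNReal.ofReal ((φ (x * y) - ψ y) / y)) ⟨y, hy⟩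

lemma eventually_rpow_add_one_le_exp_half (s : ℝ) :
    ∀ᶠ u in atTop, u ^ s + 1 ≤ exp (u / 2) := by
  have h := (isLittleO_rpow_exp_pos_mul_atTop s one_half_pos).add
    (isLittleO_rpow_exp_pos_mul_atTop 0 one_half_pos)
  filter_upwards [h.bound one_pos] with u hu
  simp only [rpow_zero, norm_eq_abs, abs_exp, one_mul] at hu
  rw [div_eq_inv_mul, ← one_div]
  exact (le_abs_self _).trans hu

lemma rpow_div_le_of_rpow_le {p β x y K : ℝ} (hp : 1 ≤ p) (hβ : 0 < β) (hx : 0 ≤ x)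
    (hy : 0 ≤ y) (hK : 0 ≤ K) (hyK : y ^ β ≤ K) :
    (x * y) ^ p / y ≤ x ^ p * K ^ ((p - 1) / β) := by
  rcases hy.eq_or_lt with rfl | hy
  · rw [div_zero]; positivity
  have hyK' : y ≤ K ^ β⁻¹ := by
    simpa [rpow_rpow_inv hy.le hβ.ne'] using rpow_le_rpow (by positivity) hyK (inv_nonneg.2 hβ.le)
  calc (x * y) ^ p / y = x ^ p * y ^ (p - 1) := by
        rw [mul_rpow hx hy.le, rpow_sub_one hy.ne', mul_div_assoc]
    _ ≤ x ^ p * (K ^ β⁻¹) ^ (p - 1) := by gcongr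
    _ = x ^ p * K ^ ((p - 1) / β) := by rw [← rpow_mul hK, inv_mul_eq_div]

lemma mul_rpow_le_exp_rpow_sub_one {p β x y : ℝ} (hβ : 0 < β) (hx : 0 < x)
    (hy : 0 ≤ y) (hlog : 2 * p * log x ≤ y ^ β)
    (hgrowth : (y ^ β) ^ (p / β) + 1 ≤ exp (y ^ β / 2)) :
    (x * y) ^ p ≤ exp (y ^ β) - 1 := by
  have hxp : x ^ p ≤ exp (y ^ β / 2) := by
    rw [rpow_def_of_pos hx]
    exact exp_le_exp.2 (by linarith)
  have hyp : y ^ p = (y ^ β) ^ (p / β) := by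
    rw [← rpow_mul hy, mul_div_cancel₀ _ hβ.ne']
  have hexp : exp (y ^ β) = exp (y ^ β / 2) * exp (y ^ β / 2) := by
    rw [← exp_add, add_halves]
  have hone : 1 ≤ exp (y ^ β / 2) := one_le_exp (by positivity)
  calc (x * y) ^ p = x ^ p * (y ^ β) ^ (p / β) := by rw [mul_rpow hx.le hy, hyp]
    _ ≤ exp (y ^ β / 2) * (exp (y ^ β / 2) - 1) := by
        gcongr
        linarith
    _ ≤ exp (y ^ β) - 1 := by rw [hexp]; nlinarith

lemma rho_integrand_le {p β x y : ℝ} (hp : 1 ≤ p) (hβ : 0 < β) (hx : 1 ≤ x) (hy : 0 ≤ y)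
    (hgrowth : ∀ u ≥ 2 * p * log x, u ^ (p / β) + 1 ≤ exp (u / 2)) :
    ((x * y) ^ p - (exp (y ^ β) - 1)) / y ≤
      (2 * p) ^ ((p - 1) / β) * (x ^ p * log x ^ ((p - 1) / β)) := by
  have hlog : 0 ≤ log x := log_nonneg hx
  by_cases hsmall : y ^ β ≤ 2 * p * log x
  · have hψ : 0 ≤ exp (y ^ β) - 1 := by linarith [one_le_exp (rpow_nonneg hy β)]
    calc ((x * y) ^ p - (exp (y ^ β) - 1)) / y ≤ (x * y) ^ p / y := by gcongr; linarith
      _ ≤ x ^ p * (2 * p * log x) ^ ((p - 1) / β) :=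
        rpow_div_le_of_rpow_le hp hβ (by linarith) hy (by positivity) hsmall
      _ = (2 * p) ^ ((p - 1) / β) * (x ^ p * log x ^ ((p - 1) / β)) := by
        rw [mul_rpow (by positivity) hlog]; ring
  · have hφψ := mul_rpow_le_exp_rpow_sub_one hβ (by linarith) hy
      (not_le.1 hsmall).le (hgrowth _ (not_le.1 hsmall).le)
    calc ((x * y) ^ p - (exp (y ^ β) - 1)) / y ≤ 0 :=
          div_nonpos_of_nonpos_of_nonneg (by linarith) hy
      _ ≤ _ := by positivity

lemma eventually_rho_integrand_le {p β : ℝ} (hp : 1 ≤ p) (hβ : 0 < β) :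
    ∀ᶠ x in atTop, ∀ y, 0 ≤ y → ((x * y) ^ p - (exp (y ^ β) - 1)) / y ≤
      (2 * p) ^ ((p - 1) / β) * (x ^ p * log x ^ ((p - 1) / β)) := by
  obtain ⟨u₀, hu₀⟩ := eventually_atTop.1 (eventually_rpow_add_one_le_exp_half (p / β))
  have hlog : Tendsto (fun x => 2 * p * log x) atTop atTop :=
    tendsto_log_atTop.const_mul_atTop (by linarith)
  filter_upwards [eventually_ge_atTop 1, hlog.eventually_ge_atTop u₀] with x hx hxu y hy
  exact rho_integrand_le hp hβ hx hy fun u hu => hu₀ u (hxu.trans hu)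

lemma le_two_mul_rho_integrand {p β x : ℝ} (hp : 1 ≤ p) (hβ : 0 < β) (hx : 1 < x)
    (hL : 2 ≤ log x ^ (p / β)) :
    x ^ p * log x ^ ((p - 1) / β) ≤ 2 * (((x * log x ^ (1 / β)) ^ p -
      (exp ((log x ^ (1 / β)) ^ β) - 1)) / log x ^ (1 / β)) := by
  have hx0 : 0 < x := by linarith
  have hL0 : 0 < log x := log_pos hx
  have hy : 0 < log x ^ (1 / β) := rpow_pos_of_pos hL0 _
  have hψ : exp ((log x ^ (1 / β)) ^ β) = x := by
    rw [← rpow_mul hL0.le, one_div_mul_cancel hβ.ne', rpow_one, exp_log hx0]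
  have hφ : (x * log x ^ (1 / β)) ^ p = x ^ p * log x ^ ((p - 1) / β) * log x ^ (1 / β) := by
    rw [mul_assoc, ← rpow_add hL0, mul_rpow hx0.le hy.le, ← rpow_mul hL0.le]
    congr 2; ring
  have hxp : x ≤ x ^ p := by
    simpa using rpow_le_rpow_of_exponent_le hx.le hp
  have h2x : 2 * x ≤ x ^ p * log x ^ (p / β) := by nlinarith [rpow_pos_of_pos hx0 p]
  have hsplit : log x ^ (p / β) = log x ^ ((p - 1) / β) * log x ^ (1 / β) := by
    rw [← rpow_add hL0]; congr 1; ring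
  rw [hψ, hφ, mul_div_assoc', le_div_iff₀ hy]
  rw [hsplit, ← mul_assoc] at h2x
  linarith

lemma eventually_le_two_mul_rho_integrand {p β : ℝ} (hp : 1 ≤ p) (hβ : 0 < β) :
    ∀ᶠ x in atTop, x ^ p * log x ^ ((p - 1) / β) ≤ 2 * (((x * log x ^ (1 / β)) ^ p -
      (exp ((log x ^ (1 / β)) ^ β) - 1)) / log x ^ (1 / β)) := by
  have hL : Tendsto (fun x => log x ^ (p / β)) atTop atTop :=
    (tendsto_rpow_atTop (by positivity)).comp tendsto_log_atTop
  filter_upwards [eventually_gt_atTop 1, hL.eventually_ge_atTop 2] with x hx hxL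
  exact le_two_mul_rho_integrand hp hβ hx hxL

/-- If φ(x) = x^p (p ≥ 1) and ψ(x) = exp(x^β) − 1 (β > 0) then
ρ(x) ≃ x^p (log x)^((p−1)/β). -/
theorem stmt11 (p β : ℝ) (hp : 1 ≤ p) (hβ : 0 < β) :
    EquivE (rhoSup (fun t => t ^ p) (fun t => Real.exp (t ^ β) - 1))
      (fun x => ENNReal.ofReal (x ^ p * Real.log x ^ ((p - 1) / β))) := by
  constructor
  · refine DominE.of_eventually_le (C := (2 * p) ^ ((p - 1) / β)) (by positivity) ?_
    filter_upwards [eventually_rho_integrand_le hp hβ] with x hx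
    rw [← ENNReal.ofReal_mul (by positivity)]
    exact rhoSup_le_ofReal hx
  · refine DominE.of_eventually_le two_pos ?_
    filter_upwards [eventually_le_two_mul_rho_integrand hp hβ, eventually_ge_atTop 1] with x hx hx1
    calc ENNReal.ofReal (x ^ p * log x ^ ((p - 1) / β))
        ≤ ENNReal.ofReal 2 * ENNReal.ofReal (((x * log x ^ (1 / β)) ^ p -
            (exp ((log x ^ (1 / β)) ^ β) - 1)) / log x ^ (1 / β)) := by
          rw [← ENNReal.ofReal_mul zero_le_two]
          exact ENNReal.ofReal_le_ofReal hx
      _ ≤ _ := by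
          gcongr
          exact ofReal_le_rhoSup (fun t => t ^ p) (fun t => exp (t ^ β) - 1)
            (rpow_nonneg (log_nonneg hx1) _)
end
end

section
/- If φ(x) = x^p and ψ(x) = x^r with r > p + 1 ≥ 2, then ζ(x) = sup_{y ≥ 0} (φ(xy) − ψ(y)/y) is equivalent to x ↦ x^{p(r−1)/(r−p−1)}. -/
open Filter Topology MeasureTheory
open scoped ENNReal
noncomputable section

/-!
Write `ζ(x) = sup_y ((xy)^p - y^(r-1))` and `β = p/(r-p-1)`, so that `x^p = (x^β)^(r-p-1)`.
For `y ≥ x^β` the penalty `y^(r-1) = y^p y^(r-p-1)` dominates `(xy)^p`, while for `y ≤ x^β`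
one has `(xy)^p ≤ x^(p+βp) = x^(p(r-1)/(r-p-1))`; this gives the upper bound. The lower
bound comes from the single choice `y = x^β / 2`, at which the supremand equals
`(2^(-p) - 2^(1-r)) x^(p(r-1)/(r-p-1))`, a positive multiple since `p < r - 1`.
-/

namespace Real

theorem rpow_div_self {r : ℝ} (hr : r ≠ 1) (y : ℝ) : y ^ r / y = y ^ (r - 1) := by
  rcases eq_or_ne y 0 with rfl | hy
  · rw [div_zero, zero_rpow (sub_ne_zero.mpr hr)]
  · exact (rpow_sub_one hy r).symm

section PowerPenalty

variable {p r x y : ℝ}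

theorem add_mul_div_sub_sub_one (hd : 0 < r - p - 1) :
    p + p / (r - p - 1) * p = p * (r - 1) / (r - p - 1) := by
  field_simp; ring

theorem div_sub_sub_one_mul_sub_one (hd : 0 < r - p - 1) :
    p / (r - p - 1) * (r - 1) = p * (r - 1) / (r - p - 1) := by
  field_simp

theorem mul_rpow_sub_rpow_sub_one_le (hp : 0 < p) (hd : 0 < r - p - 1) (hx : 0 ≤ x)
    (hy : 0 ≤ y) : (x * y) ^ p - y ^ (r - 1) ≤ x ^ (p * (r - 1) / (r - p - 1)) := by
  set β := p / (r - p - 1)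
  rw [mul_rpow hx hy]
  rcases le_total y (x ^ β) with hyβ | hβy
  · have hxy : x ^ p * y ^ p ≤ x ^ (p * (r - 1) / (r - p - 1)) :=
      calc x ^ p * y ^ p ≤ x ^ p * (x ^ β) ^ p := by gcongr
        _ = x ^ (p * (r - 1) / (r - p - 1)) := by
          rw [← rpow_mul hx, ← rpow_add' hx (by positivity), add_mul_div_sub_sub_one hd]
    linarith [rpow_nonneg hy (r - 1)]
  · have hxy : x ^ p * y ^ p ≤ y ^ (r - 1) :=
      calc x ^ p * y ^ p = (x ^ β) ^ (r - p - 1) * y ^ p := by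
            rw [← rpow_mul hx, div_mul_cancel₀ p hd.ne']
        _ ≤ y ^ (r - p - 1) * y ^ p := by gcongr
        _ = y ^ (r - 1) := by rw [← rpow_add' hy (by linarith)]; ring_nf
    linarith [rpow_nonneg hx (p * (r - 1) / (r - p - 1))]

theorem mul_rpow_sub_rpow_sub_one_at_half (hp : 0 < p) (hd : 0 < r - p - 1) (hx : 0 ≤ x) :
    (x * (x ^ (p / (r - p - 1)) / 2)) ^ p - (x ^ (p / (r - p - 1)) / 2) ^ (r - 1)
      = ((1 / 2) ^ p - (1 / 2) ^ (r - 1)) * x ^ (p * (r - 1) / (r - p - 1)) := by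
  have hxβ : 0 ≤ x ^ (p / (r - p - 1)) := rpow_nonneg hx _
  have hpβ : p + p / (r - p - 1) * p ≠ 0 := by
    rw [add_mul_div_sub_sub_one hd]
    exact (div_pos (mul_pos hp (by linarith)) hd).ne'
  have gain : (x * (x ^ (p / (r - p - 1)) / 2)) ^ p
      = (1 / 2) ^ p * x ^ (p * (r - 1) / (r - p - 1)) := by
    rw [show x * (x ^ (p / (r - p - 1)) / 2) = 1 / 2 * (x * x ^ (p / (r - p - 1))) by ring,
      mul_rpow (by norm_num) (by positivity), mul_rpow hx hxβ, ← rpow_mul hx,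
      ← rpow_add' hx hpβ, add_mul_div_sub_sub_one hd]
  have penalty : (x ^ (p / (r - p - 1)) / 2) ^ (r - 1)
      = (1 / 2) ^ (r - 1) * x ^ (p * (r - 1) / (r - p - 1)) := by
    rw [div_eq_inv_mul, ← one_div, mul_rpow (by norm_num) hxβ, ← rpow_mul hx,
      div_sub_sub_one_mul_sub_one hd]
  rw [gain, penalty]
  ring

end PowerPenalty

end Real

open Real

section ZetaOfPowers

variable {p r x : ℝ}

theorem zetaSup_rpow_le (hp : 0 < p) (hd : 0 < r - p - 1) (hx : 0 ≤ x) :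
    zetaSup (fun t => t ^ p) (fun t => t ^ r) x
      ≤ ENNReal.ofReal (x ^ (p * (r - 1) / (r - p - 1))) :=
  iSup_le fun ⟨y, hy⟩ => ENNReal.ofReal_le_ofReal <| by
    rw [rpow_div_self (by linarith) y]
    exact mul_rpow_sub_rpow_sub_one_le hp hd hx hy

theorem ofReal_mul_rpow_le_zetaSup (hp : 0 < p) (hd : 0 < r - p - 1) (hx : 0 ≤ x) :
    ENNReal.ofReal (((1 / 2) ^ p - (1 / 2) ^ (r - 1)) * x ^ (p * (r - 1) / (r - p - 1)))
      ≤ zetaSup (fun t => t ^ p) (fun t => t ^ r) x := by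
  refine le_iSup_of_le ⟨x ^ (p / (r - p - 1)) / 2, by positivity⟩ (le_of_eq ?_)
  rw [rpow_div_self (by linarith), mul_rpow_sub_rpow_sub_one_at_half hp hd hx]

end ZetaOfPowers

/-- If φ(x) = x^p and ψ(x) = x^r with r > p + 1 ≥ 2 then
ζ(x) ≃ x^(p(r−1)/(r−p−1)). -/
theorem stmt12 (p r : ℝ) (hp : 1 ≤ p) (hr : p + 1 < r) :
    EquivE (zetaSup (fun t => t ^ p) (fun t => t ^ r))
      (fun x => ENNReal.ofReal (x ^ (p * (r - 1) / (r - p - 1)))) := by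
  have hp₀ : 0 < p := by linarith
  have hd : 0 < r - p - 1 := by linarith
  set c : ℝ := (1 / 2) ^ p - (1 / 2) ^ (r - 1)
  have hc : 0 < c := sub_pos.2 <|
    rpow_lt_rpow_of_exponent_gt (by norm_num) (by norm_num) (by linarith)
  refine ⟨⟨1, 1, 1, one_pos, one_pos, one_pos, fun x hx => ?_⟩,
    ⟨c⁻¹, 1, 1, inv_pos.2 hc, one_pos, one_pos, fun x hx => ?_⟩⟩
  · rw [ENNReal.ofReal_one, one_mul, one_mul]
    exact zetaSup_rpow_le hp₀ hd (by linarith)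
  · rw [one_mul]
    calc ENNReal.ofReal (x ^ (p * (r - 1) / (r - p - 1)))
        = ENNReal.ofReal c⁻¹ * ENNReal.ofReal (c * x ^ (p * (r - 1) / (r - p - 1))) := by
          rw [← ENNReal.ofReal_mul (inv_nonneg.2 hc.le), inv_mul_cancel_left₀ hc.ne']
      _ ≤ ENNReal.ofReal c⁻¹ * zetaSup (fun t => t ^ p) (fun t => t ^ r) x := by
          gcongr
          exact ofReal_mul_rpow_le_zetaSup hp₀ hd (by linarith)
end
end

section
/- If φ(x) = x^p (p ≥ 1) and ψ(x) = exp(x^β) − 1 (β > 0), then ζ(x) = sup_{y ≥ 0} (φ(xy) − ψ(y)/y) is equivalent to x ↦ x^p (log x)^{p/β} for large x. -/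
open Filter Topology MeasureTheory
open scoped ENNReal
noncomputable section

/-!
With `L = log x`, the supremum defining `ζ(x)` is essentially attained at the scale
`y ≍ L^(1/β)`. At `y = L^(1/β)` the penalty `ψ(y)/y ≤ x` is negligible against
`(xy)^p = x^p L^(p/β)`, which gives the lower bound. Conversely, once `y^β ≥ 2pL`,
`exp(y^β) = exp(y^β/2)^2 ≥ x^p · (y^(p+1) + 1)` for large `y`, so the penalty exceeds
`(xy)^p`; the supremum is therefore bounded by `(x y₀)^p` with `y₀ = (2pL)^(1/β)`.
-/

open Real

lemma ofReal_le_zetaSup (φ ψ : ℝ → ℝ) (x : ℝ) {y : ℝ} (hy : 0 ≤ y) :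
    ENNReal.ofReal (φ (x * y) - ψ y / y) ≤ zetaSup φ ψ x :=
  le_iSup (fun z : {y : ℝ // 0 ≤ y} => ENNReal.ofReal (φ (x * z) - ψ z / z)) ⟨y, hy⟩

lemma zetaSup_le_of_forall_ge {φ ψ : ℝ → ℝ} {x y₀ : ℝ} (hx : 0 ≤ x)
    (hφ : MonotoneOn φ (Set.Ici 0)) (hψ : ∀ y, 0 ≤ y → 0 ≤ ψ y)
    (hlarge : ∀ y ≥ y₀, φ (x * y) ≤ ψ y / y) :
    zetaSup φ ψ x ≤ ENNReal.ofReal (φ (x * y₀)) := by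
  refine iSup_le fun ⟨y, hy⟩ => ?_
  rcases le_or_gt y y₀ with hyy₀ | hy₀y
  · refine ENNReal.ofReal_le_ofReal ?_
    have hmono : φ (x * y) ≤ φ (x * y₀) :=
      hφ (mul_nonneg hx hy) (mul_nonneg hx (hy.trans hyy₀)) (by gcongr)
    linarith [div_nonneg (hψ y hy) hy]
  · rw [ENNReal.ofReal_of_nonpos (by linarith [hlarge y hy₀y.le])]
    exact bot_le

lemma eventually_rpow_add_one_le_exp_rpow_div_two (q : ℝ) {β : ℝ} (hβ : 0 < β) :
    ∀ᶠ t in atTop, t ^ q + 1 ≤ exp (t ^ β / 2) := by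
  have hlim : Tendsto (fun t : ℝ => t ^ β) atTop atTop := tendsto_rpow_atTop hβ
  have hpow : (fun t : ℝ => t ^ q) =o[atTop] fun t => exp (t ^ β / 2) := by
    refine ((isLittleO_rpow_exp_pos_mul_atTop (q / β) one_half_pos).comp_tendsto hlim).congr'
      ?_ (Eventually.of_forall fun t => by simp only [Function.comp, div_eq_inv_mul, mul_one])
    filter_upwards [eventually_ge_atTop 0] with t ht
    simp only [Function.comp, ← rpow_mul ht, mul_div_cancel₀ q hβ.ne']
  have hone : (fun _ : ℝ => (1 : ℝ)) =o[atTop] fun t => exp (t ^ β / 2) := by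
    refine (Asymptotics.isLittleO_one_left_iff ℝ).mpr ?_
    simpa only [norm_eq_abs, abs_exp, Function.comp_def] using
      tendsto_exp_atTop.comp (hlim.atTop_div_const two_pos)
  filter_upwards [(hpow.add hone).def one_pos] with t ht
  simpa only [one_mul, norm_eq_abs, abs_exp] using (le_abs_self _).trans ht

lemma mul_rpow_le_exp_sub_one_div {x y p s : ℝ} (hx : 1 ≤ x) (hy : 0 < y) (hp : 0 ≤ p)
    (hgrowth : y ^ (p + 1) + 1 ≤ exp (s / 2)) (hlog : p * log x ≤ s / 2) :
    (x * y) ^ p ≤ (exp s - 1) / y := by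
  have hxp : x ^ p ≤ exp (s / 2) := by
    rw [rpow_def_of_pos (by linarith), mul_comm]
    exact exp_le_exp.mpr hlog
  have hxp1 : 1 ≤ x ^ p := one_le_rpow hx hp
  have hsplit : exp s = exp (s / 2) * exp (s / 2) := by rw [← exp_add, add_halves]
  have hy1 : 0 ≤ y ^ (p + 1) := rpow_nonneg hy.le _
  rw [le_div_iff₀ hy, mul_rpow (by linarith) hy.le, mul_assoc, ← rpow_add_one hy.ne']
  nlinarith [mul_le_mul hxp hgrowth (by positivity) (exp_pos _).le]

lemma mul_rpow_inv_rpow {x a : ℝ} (hx : 0 ≤ x) (ha : 0 ≤ a) (p β : ℝ) :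
    (x * a ^ β⁻¹) ^ p = x ^ p * a ^ (p / β) := by
  rw [mul_rpow hx (rpow_nonneg ha _), ← rpow_mul ha, inv_mul_eq_div]

lemma zetaSup_rpow_exp_rpow_le {p β : ℝ} (hp : 0 < p) (hβ : 0 < β) :
    ∃ x₀ > 0, ∀ x ≥ x₀, zetaSup (fun t => t ^ p) (fun t => exp (t ^ β) - 1) x ≤
      ENNReal.ofReal ((2 * p) ^ (p / β) * (x ^ p * log x ^ (p / β))) := by
  obtain ⟨M, hM⟩ := eventually_atTop.mp (eventually_rpow_add_one_le_exp_rpow_div_two (p + 1) hβ)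
  set M' := max M 1
  refine ⟨exp (M' ^ β / (2 * p)), exp_pos _, fun x hx => ?_⟩
  have hx0 : 0 < x := (exp_pos _).trans_le hx
  have hlogx : M' ^ β / (2 * p) ≤ log x := (le_log_iff_exp_le hx0).mpr hx
  have hlog0 : 0 < log x :=
    lt_of_lt_of_le (div_pos (rpow_pos_of_pos (by positivity) _) (by positivity)) hlogx
  have hlog1 : M' ^ β ≤ 2 * p * log x := by rwa [div_le_iff₀' (by positivity)] at hlogx
  have h2pL : 0 ≤ 2 * p * log x := by positivity
  set y₀ := (2 * p * log x) ^ β⁻¹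
  have hM'y₀ : M' ≤ y₀ := (le_rpow_inv_iff_of_pos (by positivity) h2pL hβ).mpr hlog1
  have hbound := zetaSup_le_of_forall_ge (φ := fun t => t ^ p)
    (ψ := fun t => exp (t ^ β) - 1) (y₀ := y₀) hx0.le
    (monotoneOn_rpow_Ici_of_exponent_nonneg hp.le)
    (fun y hy => sub_nonneg.mpr (one_le_exp (rpow_nonneg hy β)))
    (fun y hy => by
      have hM'y : M' ≤ y := hM'y₀.trans hy
      have hy0 : 0 < y := one_pos.trans_le ((le_max_right _ _).trans hM'y)
      refine mul_rpow_le_exp_sub_one_div (one_le_exp (by positivity) |>.trans hx) hy0 hp.le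
        (hM y ((le_max_left _ _).trans hM'y)) ?_
      have : 2 * p * log x ≤ y ^ β := (rpow_inv_le_iff_of_pos h2pL hy0.le hβ).mp hy
      linarith)
  rwa [mul_rpow_inv_rpow hx0.le h2pL, mul_rpow (by positivity) hlog0.le,
    mul_left_comm] at hbound

lemma rpow_mul_log_rpow_le_two_mul_zetaSup {p β : ℝ} (hp : 1 ≤ p) (hβ : 0 < β) {x : ℝ}
    (hx : exp (2 ^ (β / p)) ≤ x) :
    ENNReal.ofReal (x ^ p * log x ^ (p / β)) ≤
      2 * zetaSup (fun t => t ^ p) (fun t => exp (t ^ β) - 1) x := by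
  have hx0 : 0 < x := (exp_pos _).trans_le hx
  have hlogx : 2 ^ (β / p) ≤ log x := (le_log_iff_exp_le hx0).mpr hx
  have hlog1 : 1 ≤ log x := (one_le_rpow one_le_two (by positivity)).trans hlogx
  have hx1 : 1 ≤ x := (one_le_exp (rpow_nonneg zero_le_two _)).trans hx
  have htwo : 2 ≤ log x ^ (p / β) := by
    rw [← rpow_inv_le_iff_of_pos zero_le_two (by positivity) (by positivity), inv_div]
    exact hlogx
  set y := log x ^ β⁻¹
  have hy1 : 1 ≤ y := one_le_rpow hlog1 (by positivity)
  have hpenalty : (exp (y ^ β) - 1) / y ≤ x := by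
    rw [rpow_inv_rpow (by positivity) hβ.ne', exp_log hx0, div_le_iff₀ (by positivity)]
    nlinarith
  have hxp : x ≤ x ^ p := by simpa using rpow_le_rpow_of_exponent_le hx1 hp
  have hval : x ^ p * log x ^ (p / β) ≤ 2 * ((x * y) ^ p - (exp (y ^ β) - 1) / y) := by
    rw [mul_rpow_inv_rpow hx0.le (by positivity)]
    nlinarith [rpow_nonneg hx0.le p]
  calc ENNReal.ofReal (x ^ p * log x ^ (p / β))
      ≤ ENNReal.ofReal (2 * ((x * y) ^ p - (exp (y ^ β) - 1) / y)) :=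
        ENNReal.ofReal_le_ofReal hval
    _ = 2 * ENNReal.ofReal ((x * y) ^ p - (exp (y ^ β) - 1) / y) := by
        rw [ENNReal.ofReal_mul zero_le_two, ENNReal.ofReal_ofNat]
    _ ≤ 2 * zetaSup (fun t => t ^ p) (fun t => exp (t ^ β) - 1) x := by
        gcongr
        exact ofReal_le_zetaSup (fun t => t ^ p) (fun t => exp (t ^ β) - 1) x (by positivity)

/-- If φ(x) = x^p (p ≥ 1) and ψ(x) = exp(x^β) − 1 (β > 0) then
ζ(x) ≃ x^p (log x)^(p/β). -/
theorem stmt13 (p β : ℝ) (hp : 1 ≤ p) (hβ : 0 < β) :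
    EquivE (zetaSup (fun t => t ^ p) (fun t => Real.exp (t ^ β) - 1))
      (fun x => ENNReal.ofReal (x ^ p * Real.log x ^ (p / β))) := by
  have hp0 : 0 < p := one_pos.trans_le hp
  constructor
  · obtain ⟨x₀, hx₀, hle⟩ := zetaSup_rpow_exp_rpow_le hp0 hβ
    refine ⟨(2 * p) ^ (p / β), 1, x₀, by positivity, one_pos, hx₀, fun x hx => ?_⟩
    rw [one_mul, ← ENNReal.ofReal_mul (by positivity)]
    exact hle x hx
  · refine ⟨2, 1, exp (2 ^ (β / p)), two_pos, one_pos, exp_pos _, fun x hx => ?_⟩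
    rw [one_mul, ENNReal.ofReal_ofNat]
    exact rpow_mul_log_rpow_le_two_mul_zetaSup hp hβ hx
end
end

section
/- Let ψ(x) = x^r and ρ(x) = x^p with r > 1, p ≥ 1. Then the function (ψ* ∘ ρ*)* is equivalent to x ↦ x^{rp/(r+p−1)}. -/
open Filter Topology MeasureTheory
open scoped ENNReal
noncomputable section

/-! For `p > 1`, Young's inequality and its equality case `z = a ^ (q - 1)` pin the Legendre
transform of `t ^ p` between `(y / 2) ^ q` and `y ^ q`, where `q = p / (p - 1)`. Composing,
`ψ* ∘ ρ*` lies between `(y / 4) ^ σ` and `y ^ σ` for `σ = p / (p - 1) * r / (r - 1)`, and the same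
two facts make the outer transform comparable to `x ^ σ'`, where `σ' = rp / (r + p - 1)` is the
conjugate exponent of `σ`. For `p = 1`, `ρ*` vanishes on `[0, 1]` and is `∞` beyond, so the outer
transform is exactly `x`. -/

section LegendreAPI

variable {f : ℝ → ℝ} {g : ℝ → ℝ≥0∞} {x z : ℝ}

lemma ofReal_mul_sub_le_leg (hz : 0 ≤ z) :
    ENNReal.ofReal (x * z - f z) ≤ Leg f x :=
  le_iSup (fun y : {y : ℝ // 0 ≤ y} => ENNReal.ofReal (x * y - f y)) ⟨z, hz⟩

lemma leg_le_ofReal {M : ℝ} (h : ∀ z, 0 ≤ z → x * z - f z ≤ M) : Leg f x ≤ ENNReal.ofReal M :=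
  iSup_le fun y => ENNReal.ofReal_le_ofReal (h y y.2)

lemma ofReal_mul_sub_le_legE (hz : 0 ≤ z) :
    ENNReal.ofReal (x * z) - g z ≤ LegE g x :=
  le_iSup (fun y : {y : ℝ // 0 ≤ y} => ENNReal.ofReal (x * y) - g y) ⟨z, hz⟩

lemma legE_le {M : ℝ≥0∞} (h : ∀ z, 0 ≤ z → ENNReal.ofReal (x * z) - g z ≤ M) : LegE g x ≤ M :=
  iSup_le fun y => h y y.2

lemma le_extLT {t : ℝ≥0∞} {s : ℝ} (hs : 0 ≤ s) (hst : ENNReal.ofReal s ≤ t) :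
    g s ≤ extLT g t :=
  le_iSup (fun u : {u : ℝ // 0 ≤ u ∧ ENNReal.ofReal u ≤ t} => g u) ⟨s, hs, hst⟩

lemma extLT_le {t M : ℝ≥0∞} (h : ∀ s, 0 ≤ s → ENNReal.ofReal s ≤ t → g s ≤ M) :
    extLT g t ≤ M :=
  iSup_le fun s => h s s.2.1 s.2.2

lemma extLT_zero : extLT g 0 = g 0 := by
  refine le_antisymm (extLT_le fun s hs hs0 => ?_) (le_extLT le_rfl (by simp))
  rw [le_antisymm (ENNReal.ofReal_eq_zero.1 (nonpos_iff_eq_zero.1 hs0)) hs]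

lemma leg_zero (hf : ∀ y, 0 ≤ y → 0 ≤ f y) : Leg f 0 = 0 :=
  nonpos_iff_eq_zero.1 <| by
    simpa using leg_le_ofReal (f := f) (x := 0) (M := 0) fun z hz => by linarith [hf z hz]

lemma extLT_leg_top (f : ℝ → ℝ) : extLT (Leg f) ⊤ = ⊤ := by
  refine ENNReal.eq_top_of_forall_nnreal_le fun n => ?_
  have hs : (0 : ℝ) ≤ n + |f 1| := by positivity
  calc (n : ℝ≥0∞) ≤ ENNReal.ofReal ((n + |f 1|) * 1 - f 1) := by
        rw [← ENNReal.ofReal_coe_nnreal]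
        exact ENNReal.ofReal_le_ofReal (by linarith [le_abs_self (f 1)])
    _ ≤ Leg f (n + |f 1|) := ofReal_mul_sub_le_leg zero_le_one
    _ ≤ extLT (Leg f) ⊤ := le_extLT hs le_top

end LegendreAPI

section Young

variable {p q a : ℝ}

lemma Real.HolderConjugate.mul_rpow_sub_one (h : p.HolderConjugate q) (ha : 0 ≤ a) :
    a * a ^ (q - 1) = a ^ q := by
  conv_rhs => rw [← add_sub_cancel 1 q, Real.rpow_add' ha (by linarith [h.symm.pos]),
    Real.rpow_one]

lemma Real.HolderConjugate.rpow_sub_one_rpow (h : p.HolderConjugate q) (ha : 0 ≤ a) :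
    (a ^ (q - 1)) ^ p = a ^ q := by
  rw [← Real.rpow_mul ha, sub_one_mul, mul_comm, h.mul_eq_add, add_sub_cancel_left]

lemma Real.HolderConjugate.two_mul_mul_sub_rpow (h : p.HolderConjugate q) (ha : 0 ≤ a) :
    2 * a * a ^ (q - 1) - (a ^ (q - 1)) ^ p = a ^ q := by
  rw [mul_assoc, h.mul_rpow_sub_one ha, h.rpow_sub_one_rpow ha]
  ring

lemma Real.HolderConjugate.mul_sub_div_rpow_le (h : p.HolderConjugate q) {c x z : ℝ}
    (hc : 0 < c) (hx : 0 ≤ x) (hz : 0 ≤ z) : x * z - (z / c) ^ p ≤ (c * x) ^ q := by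
  have hyoung := Real.young_inequality_of_nonneg (by positivity : 0 ≤ c * x)
    (by positivity : 0 ≤ z / c) h.symm
  have hq : (c * x) ^ q / q ≤ (c * x) ^ q := div_le_self (by positivity) h.symm.lt.le
  have hp : (z / c) ^ p / p ≤ (z / c) ^ p := div_le_self (by positivity) h.lt.le
  have hxz : c * x * (z / c) = x * z := by field_simp
  linarith

lemma holderConjugate_mul_conjExponent (hp : 1 < p) (hr : 1 < r) :
    (p.conjExponent * r.conjExponent).HolderConjugate (r * p / (r + p - 1)) := by
  refine Real.holderConjugate_iff.2 ⟨?_, ?_⟩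
  · exact one_lt_mul_of_lt_of_le (Real.HolderConjugate.conjExponent hp).symm.lt
      (Real.HolderConjugate.conjExponent hr).symm.lt.le
  · have : p - 1 ≠ 0 := by linarith
    have : r - 1 ≠ 0 := by linarith
    have : r + p - 1 ≠ 0 := by linarith
    simp only [Real.conjExponent]
    field_simp
    ring

end Young

section PowerTransforms

variable {p q : ℝ}

lemma leg_rpow_le (h : p.HolderConjugate q) {y : ℝ} (hy : 0 ≤ y) :
    Leg (fun t => t ^ p) y ≤ ENNReal.ofReal (y ^ q) := by
  refine leg_le_ofReal fun z hz => ?_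
  have hyoung := Real.young_inequality_of_nonneg hz hy h
  have hp : z ^ p / p ≤ z ^ p := div_le_self (by positivity) h.lt.le
  have hq : y ^ q / q ≤ y ^ q := div_le_self (by positivity) h.symm.lt.le
  linarith [mul_comm y z]

lemma ofReal_half_rpow_le_leg_rpow (h : p.HolderConjugate q) {y : ℝ} (hy : 0 ≤ y) :
    ENNReal.ofReal ((y / 2) ^ q) ≤ Leg (fun t => t ^ p) y := by
  have ha : 0 ≤ y / 2 := by positivity
  calc ENNReal.ofReal ((y / 2) ^ q)
        = ENNReal.ofReal (2 * (y / 2) * (y / 2) ^ (q - 1) - ((y / 2) ^ (q - 1)) ^ p) := by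
        rw [h.two_mul_mul_sub_rpow ha]
    _ ≤ Leg (fun t => t ^ p) (2 * (y / 2)) :=
        ofReal_mul_sub_le_leg (Real.rpow_nonneg ha (q - 1))
    _ = Leg (fun t => t ^ p) y := by rw [mul_div_cancel₀ y two_ne_zero]

lemma leg_rpow_one_of_le_one {y : ℝ} (hy : y ≤ 1) : Leg (fun t => t ^ (1 : ℝ)) y = 0 :=
  nonpos_iff_eq_zero.1 <| by
    simpa using leg_le_ofReal (f := fun t => t ^ (1 : ℝ)) (M := 0) fun z hz => by
      rw [Real.rpow_one]; nlinarith

lemma leg_rpow_one_of_one_lt {y : ℝ} (hy : 1 < y) : Leg (fun t => t ^ (1 : ℝ)) y = ⊤ := by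
  refine ENNReal.eq_top_of_forall_nnreal_le fun n => ?_
  have hz : (0 : ℝ) ≤ n / (y - 1) := div_nonneg n.2 (by linarith)
  have hyz : y * (n / (y - 1)) - n / (y - 1) = n := by
    field_simp [(by linarith : y - 1 ≠ 0)]
  calc (n : ℝ≥0∞) = ENNReal.ofReal (y * (n / (y - 1)) - (n / (y - 1)) ^ (1 : ℝ)) := by
        rw [Real.rpow_one, hyz, ENNReal.ofReal_coe_nnreal]
    _ ≤ _ := ofReal_mul_sub_le_leg hz

end PowerTransforms

section Composition

variable {p p' r r' : ℝ}

lemma extLT_leg_rpow_le (hp : p.HolderConjugate p') (hr : r.HolderConjugate r') {y : ℝ}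
    (hy : 0 ≤ y) :
    extLT (Leg fun t => t ^ r) (Leg (fun t => t ^ p) y) ≤ ENNReal.ofReal (y ^ (p' * r')) := by
  refine extLT_le fun s hs hsy => ?_
  have hs_le : s ≤ y ^ p' :=
    (ENNReal.ofReal_le_ofReal_iff (by positivity)).1 (hsy.trans (leg_rpow_le hp hy))
  calc Leg (fun t => t ^ r) s ≤ ENNReal.ofReal (s ^ r') := leg_rpow_le hr hs
    _ ≤ ENNReal.ofReal ((y ^ p') ^ r') :=
        ENNReal.ofReal_le_ofReal (Real.rpow_le_rpow hs hs_le hr.symm.nonneg)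
    _ = ENNReal.ofReal (y ^ (p' * r')) := by rw [Real.rpow_mul hy]

lemma ofReal_rpow_le_extLT_leg_rpow (hp : p.HolderConjugate p') (hr : r.HolderConjugate r')
    {y : ℝ} (hy : 0 ≤ y) :
    ENNReal.ofReal ((y / 4) ^ (p' * r')) ≤ extLT (Leg fun t => t ^ r) (Leg (fun t => t ^ p) y) := by
  have hs : 0 ≤ (y / 2) ^ p' := by positivity
  have hquarter : (y / 4) ^ p' ≤ (y / 2) ^ p' / 2 := by
    have htwo : 2 ≤ (2 : ℝ) ^ p' := by
      simpa using Real.rpow_le_rpow_of_exponent_le one_le_two hp.symm.lt.le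
    rw [show y / 4 = (y / 2) / 2 by ring, Real.div_rpow (by positivity) zero_le_two]
    exact div_le_div_of_nonneg_left hs two_pos htwo
  calc ENNReal.ofReal ((y / 4) ^ (p' * r')) = ENNReal.ofReal (((y / 4) ^ p') ^ r') := by
        rw [Real.rpow_mul (by positivity)]
    _ ≤ ENNReal.ofReal (((y / 2) ^ p' / 2) ^ r') :=
        ENNReal.ofReal_le_ofReal (Real.rpow_le_rpow (by positivity) hquarter hr.symm.nonneg)
    _ ≤ Leg (fun t => t ^ r) ((y / 2) ^ p') := ofReal_half_rpow_le_leg_rpow hr hs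
    _ ≤ _ := le_extLT hs (ofReal_half_rpow_le_leg_rpow hp hy)

lemma legE_extLT_leg_rpow_one (r : ℝ) {x : ℝ} (hx : 0 ≤ x) :
    LegE (fun y => extLT (Leg fun t => t ^ r) (Leg (fun t => t ^ (1 : ℝ)) y)) x =
      ENNReal.ofReal x := by
  have hzero : extLT (Leg fun t => t ^ r) 0 = 0 := by
    rw [extLT_zero, leg_zero fun y hy => Real.rpow_nonneg hy r]
  refine le_antisymm (legE_le fun z hz => ?_) ?_
  · rcases le_or_gt z 1 with hz1 | hz1
    · rw [leg_rpow_one_of_le_one hz1, hzero, tsub_zero]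
      exact ENNReal.ofReal_le_ofReal (mul_le_of_le_one_right hx hz1)
    · rw [leg_rpow_one_of_one_lt hz1, extLT_leg_top, ENNReal.sub_top]
      exact zero_le
  · simpa only [mul_one, leg_rpow_one_of_le_one le_rfl, hzero, tsub_zero] using
      ofReal_mul_sub_le_legE (x := x)
        (g := fun y => extLT (Leg fun t => t ^ r) (Leg (fun t => t ^ (1 : ℝ)) y)) zero_le_one

end Composition

section OuterTransform

variable {σ q : ℝ} {g : ℝ → ℝ≥0∞}

lemma legE_le_ofReal_rpow (h : σ.HolderConjugate q) {c : ℝ} (hc : 0 < c)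
    (hg : ∀ y, 0 ≤ y → ENNReal.ofReal ((y / c) ^ σ) ≤ g y) {x : ℝ} (hx : 0 ≤ x) :
    LegE g x ≤ ENNReal.ofReal ((c * x) ^ q) := by
  refine legE_le fun z hz => ?_
  calc ENNReal.ofReal (x * z) - g z ≤ ENNReal.ofReal (x * z) - ENNReal.ofReal ((z / c) ^ σ) :=
        tsub_le_tsub_left (hg z hz) _
    _ = ENNReal.ofReal (x * z - (z / c) ^ σ) := (ENNReal.ofReal_sub _ (by positivity)).symm
    _ ≤ ENNReal.ofReal ((c * x) ^ q) :=
        ENNReal.ofReal_le_ofReal (h.mul_sub_div_rpow_le hc hx hz)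

lemma ofReal_rpow_le_legE (h : σ.HolderConjugate q)
    (hg : ∀ y, 0 ≤ y → g y ≤ ENNReal.ofReal (y ^ σ)) {x : ℝ} (hx : 0 ≤ x) :
    ENNReal.ofReal (x ^ q) ≤ LegE g (2 * x) := by
  have hy : 0 ≤ x ^ (q - 1) := Real.rpow_nonneg hx _
  calc ENNReal.ofReal (x ^ q) = ENNReal.ofReal (2 * x * x ^ (q - 1) - (x ^ (q - 1)) ^ σ) := by
        rw [h.two_mul_mul_sub_rpow hx]
    _ = ENNReal.ofReal (2 * x * x ^ (q - 1)) - ENNReal.ofReal ((x ^ (q - 1)) ^ σ) :=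
        ENNReal.ofReal_sub _ (by positivity)
    _ ≤ ENNReal.ofReal (2 * x * x ^ (q - 1)) - g (x ^ (q - 1)) := tsub_le_tsub_left (hg _ hy) _
    _ ≤ LegE g (2 * x) := ofReal_mul_sub_le_legE hy

lemma equivE_legE_of_rpow_bounds (h : σ.HolderConjugate q) {c : ℝ} (hc : 0 < c)
    (hlower : ∀ y, 0 ≤ y → ENNReal.ofReal ((y / c) ^ σ) ≤ g y)
    (hupper : ∀ y, 0 ≤ y → g y ≤ ENNReal.ofReal (y ^ σ)) :
    EquivE (LegE g) (fun x => ENNReal.ofReal (x ^ q)) := by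
  refine ⟨⟨1, c, 1, one_pos, hc, one_pos, fun x hx => ?_⟩,
    ⟨1, 2, 1, one_pos, two_pos, one_pos, fun x hx => ?_⟩⟩
  · rw [ENNReal.ofReal_one, one_mul]
    exact legE_le_ofReal_rpow h hc hlower (by linarith)
  · rw [ENNReal.ofReal_one, one_mul]
    exact ofReal_rpow_le_legE h hupper (by linarith)

end OuterTransform

lemma equivE_of_eqOn_Ici {f g : ℝ → ℝ≥0∞} (h : Set.EqOn f g (Set.Ici 0)) : EquivE f g := by
  refine ⟨⟨1, 1, 1, one_pos, one_pos, one_pos, fun x hx => ?_⟩,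
    ⟨1, 1, 1, one_pos, one_pos, one_pos, fun x hx => ?_⟩⟩ <;>
  simp [h (Set.mem_Ici.2 (by linarith : (0 : ℝ) ≤ x))]

/-- If ψ(x) = x^r and ρ(x) = x^p with r > 1, p ≥ 1, then
(ψ* ∘ ρ*)* ≃ x^(rp/(r+p−1)). -/
theorem stmt14 (p r : ℝ) (hp : 1 ≤ p) (hr : 1 < r) :
    EquivE (LegE (fun y => extLT (Leg (fun t => t ^ r)) (Leg (fun t => t ^ p) y)))
      (fun x => ENNReal.ofReal (x ^ (r * p / (r + p - 1)))) := by
  rcases hp.eq_or_lt with rfl | hp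
  · have hexp : r * 1 / (r + 1 - 1) = 1 := by
      rw [mul_one, add_sub_cancel_right, div_self (by linarith)]
    refine equivE_of_eqOn_Ici fun x (hx : 0 ≤ x) => ?_
    rw [legE_extLT_leg_rpow_one r hx, hexp, Real.rpow_one]
  · have hp' := Real.HolderConjugate.conjExponent hp
    have hr' := Real.HolderConjugate.conjExponent hr
    exact equivE_legE_of_rpow_bounds (holderConjugate_mul_conjExponent hp hr) four_pos
      (fun y hy => ofReal_rpow_le_extLT_leg_rpow hp' hr' hy)
      (fun y hy => extLT_leg_rpow_le hp' hr' hy)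
end
end

section
/- Let φ and ψ be Young functions with lim_{x→∞} φ(x)/x = ∞, ψ̃(x) = ψ(x)/x strictly increasing with ψ̃(0) = 0, ψ̃(∞) = ∞, and suppose η = φ^{-1} ∘ ψ̃ is equivalent to a Young function. Then there exists a constant C and x₀ > 0 such that φ^{-1}(x) ≤ C ζ^{-1}(x) ψ̃^{-1}(x) for all x ≥ x₀, where ζ(x) = sup_{y≥0}(φ(xy) − ψ(y)/y) and ζ^{-1} denotes its generalized inverse. -/
open Filter Topology MeasureTheory
open scoped ENNReal
noncomputable section

/-!
Put `w = ψ̃⁻¹(x)` and `a = φ⁻¹(x) / (C w)`. Because `η = φ⁻¹ ∘ ψ̃` is equivalent to a convex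
function vanishing at `0`, its slope `η(t) / t` is increasing up to constants; hence
`a y ≤ η(y)`, i.e. `φ(a y) ≤ ψ̃(y)`, once `y ≥ c w`, while for `y ≤ c w` convexity of `φ` gives
`φ(a y) ≤ x / 2`. So `ζ(s) ≤ x / 2 < x` for every `s ≤ a`, whence `a ≤ ζ⁻¹(x)` and
`φ⁻¹(x) = C a w ≤ C ζ⁻¹(x) ψ̃⁻¹(x)`.
-/

open Set

lemma StrictMonoOn.le_rightInv_iff {f g : ℝ → ℝ} (hf : StrictMonoOn f (Ici 0))
    (hg : ∀ x ≥ (0:ℝ), 0 ≤ g x ∧ f (g x) = x) {a z : ℝ} (ha : 0 ≤ a) (hz : 0 ≤ z) :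
    a ≤ g z ↔ f a ≤ z := by
  obtain ⟨hgz, hfgz⟩ := hg z hz
  conv_rhs => rw [← hfgz]
  exact (hf.le_iff_le ha hgz).symm

lemma ConvexOn.map_mul_le_mul_map_of_map_zero {f : ℝ → ℝ} (hf : ConvexOn ℝ (Ici 0) f)
    (hf0 : f 0 = 0) {c u : ℝ} (hc0 : 0 ≤ c) (hc1 : c ≤ 1) (hu : 0 ≤ u) :
    f (c * u) ≤ c * f u := by
  simpa [hf0] using hf.2 self_mem_Ici (mem_Ici.2 hu) (sub_nonneg.2 hc1) hc0 (sub_add_cancel 1 c)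

lemma ConvexOn.map_mul_le_map_mul_of_map_zero {f : ℝ → ℝ} (hf : ConvexOn ℝ (Ici 0) f)
    (hf0 : f 0 = 0) {s t : ℝ} (hs : 0 < s) (hst : s ≤ t) : f s * t ≤ f t * s := by
  have ht : 0 < t := hs.trans_le hst
  have h := hf.secant_mono self_mem_Ici (mem_Ici.2 hs.le) (mem_Ici.2 ht.le) hs.ne' ht.ne' hst
  simp only [hf0, sub_zero] at h
  rwa [div_le_div_iff₀ hs ht] at h

lemma IsYoung.div_two_le_rightInv {φ φinv : ℝ → ℝ} (hφ : IsYoung φ)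
    (hφinv : ∀ x ≥ (0:ℝ), 0 ≤ φinv x ∧ φ (φinv x) = x) {x : ℝ} (hx : 0 ≤ x) :
    φinv x / 2 ≤ φinv (x / 2) := by
  obtain ⟨hu, hφu⟩ := hφinv x hx
  rw [hφ.1.le_rightInv_iff hφinv (by positivity) (by positivity)]
  calc φ (φinv x / 2) = φ (2⁻¹ * φinv x) := by ring_nf
    _ ≤ 2⁻¹ * φ (φinv x) := hφ.2.1.map_mul_le_mul_map_of_map_zero hφ.2.2 (by norm_num)
        (by norm_num) hu
    _ = x / 2 := by rw [hφu]; ring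

lemma EquivR.exists_mul_le_mul_of_convexOn {η Y : ℝ → ℝ} (hY : ConvexOn ℝ (Ici 0) Y)
    (hY0 : Y 0 = 0) (h : EquivR η Y) :
    ∃ K c t₀ : ℝ, 0 < K ∧ 0 < c ∧ 0 < t₀ ∧ ∀ t ≥ t₀, ∀ y ≥ c * t, η t * y ≤ K * η y * t := by
  obtain ⟨⟨D₁, D₂, t₂, hD₁, hD₂, ht₂, hηY⟩, ⟨C₁, C₂, t₁, hC₁, hC₂, ht₁, hYη⟩⟩ := h
  refine ⟨C₁ * C₂ * D₁ * D₂, C₂ * D₂, max (t₁ / D₂) t₂, by positivity, by positivity,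
    lt_max_of_lt_right ht₂, fun t ht y hy => ?_⟩
  have ht0 : 0 < t := ht₂.trans_le (le_of_max_le_right ht)
  have hDt : D₂ * t ≤ y / C₂ := by rw [le_div_iff₀ hC₂]; linarith
  have hYy : Y (y / C₂) ≤ C₁ * η y := by
    have h := hYη (y / C₂) ((div_le_iff₀ hD₂).1 (le_of_max_le_left ht) |>.trans (by linarith))
    rwa [mul_div_cancel₀ y hC₂.ne'] at h
  have hslope := hY.map_mul_le_map_mul_of_map_zero hY0 (by positivity) hDt
  calc η t * y ≤ D₁ * Y (D₂ * t) * y := by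
        gcongr
        · exact (by positivity : (0:ℝ) < C₂ * D₂ * t).le.trans hy
        · exact hηY t (le_of_max_le_right ht)
    _ = D₁ * C₂ * (Y (D₂ * t) * (y / C₂)) := by field_simp
    _ ≤ D₁ * C₂ * (Y (y / C₂) * (D₂ * t)) := by gcongr
    _ ≤ D₁ * C₂ * (C₁ * η y * (D₂ * t)) := by gcongr
    _ = C₁ * C₂ * D₁ * D₂ * η y * t := by ring

lemma IsYoung.map_mul_sub_le_half {φ φinv ψt : ℝ → ℝ} (hφ : IsYoung φ)
    (hφinv : ∀ x ≥ (0:ℝ), 0 ≤ φinv x ∧ φ (φinv x) = x) (hψt : ∀ y ≥ (0:ℝ), 0 ≤ ψt y)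
    {x w K c C : ℝ} (hx : 0 ≤ x) (hw : 0 < w) (hc : 0 < c) (hKC : K ≤ C) (hcC : 2 * c ≤ C)
    (hslope : ∀ y ≥ c * w, φinv x * y ≤ K * φinv (ψt y) * w) {y : ℝ} (hy : 0 ≤ y) :
    φ (φinv x / (C * w) * y) - ψt y ≤ x / 2 := by
  have hC : 0 < C := by linarith
  have hu := (hφinv x hx).1
  have hay : 0 ≤ φinv x / (C * w) * y := by positivity
  rcases le_total y (c * w) with hyc | hyc
  · suffices φinv x / (C * w) * y ≤ φinv (x / 2) by
      linarith [(hφ.1.le_rightInv_iff hφinv hay (by positivity)).1 this, hψt y hy]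
    calc φinv x / (C * w) * y ≤ φinv x / (C * w) * (c * w) := by gcongr
      _ = φinv x * c / C := by field_simp
      _ ≤ φinv x / 2 := by rw [div_le_div_iff₀ hC two_pos]; nlinarith
      _ ≤ φinv (x / 2) := hφ.div_two_le_rightInv hφinv hx
  · have hηy := (hφinv (ψt y) (hψt y hy)).1
    suffices φinv x / (C * w) * y ≤ φinv (ψt y) by
      linarith [(hφ.1.le_rightInv_iff hφinv hay (hψt y hy)).1 this]
    calc φinv x / (C * w) * y = φinv x * y / (C * w) := div_mul_eq_mul_div _ _ _
      _ ≤ K * φinv (ψt y) * w / (C * w) :=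
          div_le_div_of_nonneg_right (hslope y hyc) (by positivity)
      _ = K / C * φinv (ψt y) := by field_simp
      _ ≤ φinv (ψt y) := mul_le_of_le_one_left hηy ((div_le_one hC).2 hKC)

lemma ofReal_le_invE {g : ℝ → ℝ≥0∞} {t : ℝ≥0∞} {a : ℝ}
    (h : ∀ s, 0 ≤ s → s < a → g s < t) : ENNReal.ofReal a ≤ invE g t :=
  le_iInf fun ⟨s, hs, hts⟩ =>
    ENNReal.ofReal_le_ofReal (le_of_not_gt fun hsa => (h s hs hsa).not_ge hts)

lemma zetaSup_le_ofReal {φ ψ : ℝ → ℝ} (hφ : MonotoneOn φ (Ici 0)) {a b s : ℝ}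
    (h : ∀ y ≥ (0:ℝ), φ (a * y) - ψ y / y ≤ b) (hs : 0 ≤ s) (hsa : s ≤ a) :
    zetaSup φ ψ s ≤ ENNReal.ofReal b :=
  iSup_le fun ⟨y, hy⟩ => ENNReal.ofReal_le_ofReal <|
    (sub_le_sub_right (hφ (mem_Ici.2 (mul_nonneg hs hy))
      (mem_Ici.2 (mul_nonneg (hs.trans hsa) hy)) (by gcongr)) _).trans (h y hy)

theorem stmt17_general (φ ψ φinv tψinv : ℝ → ℝ) (hφ : IsYoung φ)
    (htψ : StrictMonoOn (fun x => ψ x / x) (Set.Ici 0))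
    (htψ0 : ψ 0 / 0 = 0)
    (hφinv : ∀ x ≥ (0:ℝ), 0 ≤ φinv x ∧ φ (φinv x) = x)
    (htinv : ∀ x ≥ (0:ℝ), 0 ≤ tψinv x ∧ ψ (tψinv x) / tψinv x = x)
    (hη : ∃ Y, IsYoung Y ∧ EquivR (fun x => φinv (ψ x / x)) Y) :
    ∃ C x₀ : ℝ, 0 < C ∧ 0 < x₀ ∧ ∀ x ≥ x₀,
      ENNReal.ofReal (φinv x) ≤
        ENNReal.ofReal C *
          (invE (zetaSup φ ψ) (ENNReal.ofReal x) * ENNReal.ofReal (tψinv x)) := by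
  obtain ⟨Y, hY, hηY⟩ := hη
  obtain ⟨K, c, t₀, hK, hc, ht₀, hslope⟩ := hηY.exists_mul_le_mul_of_convexOn hY.2.1 hY.2.2
  have hψt : ∀ y ≥ (0:ℝ), 0 ≤ ψ y / y := fun y hy =>
    htψ0 ▸ htψ.monotoneOn self_mem_Ici (mem_Ici.2 hy) hy
  set C := max K (2 * c)
  have hC : 0 < C := lt_max_of_lt_left hK
  refine ⟨C, ψ t₀ / t₀ + 1, hC, by linarith [hψt t₀ ht₀.le], fun x hx => ?_⟩
  have hx0 : 0 < x := by linarith [hψt t₀ ht₀.le]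
  obtain ⟨-, hwx⟩ := htinv x hx0.le
  set w := tψinv x
  have hw : t₀ ≤ w := (htψ.le_rightInv_iff htinv ht₀.le hx0.le).2 (by linarith)
  have hw0 : 0 < w := ht₀.trans_le hw
  have hslope_w : ∀ y ≥ c * w, φinv x * y ≤ K * φinv (ψ y / y) * w := by
    simpa only [hwx] using hslope w hw
  have ha : ENNReal.ofReal (φinv x / (C * w)) ≤ invE (zetaSup φ ψ) (ENNReal.ofReal x) :=
    ofReal_le_invE fun s hs hsa =>
      (zetaSup_le_ofReal hφ.1.monotoneOn (fun y hy => hφ.map_mul_sub_le_half hφinv hψt hx0.le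
        hw0 hc (le_max_left _ _) (le_max_right _ _) hslope_w hy) hs hsa.le).trans_lt
        ((ENNReal.ofReal_lt_ofReal_iff hx0).2 (half_lt_self hx0))
  have hu := (hφinv x hx0.le).1
  calc ENNReal.ofReal (φinv x)
        = ENNReal.ofReal C * (ENNReal.ofReal (φinv x / (C * w)) * ENNReal.ofReal w) := by
        rw [← ENNReal.ofReal_mul (by positivity), ← ENNReal.ofReal_mul hC.le]
        congr 1
        field_simp
    _ ≤ _ := by gcongr

/-- If η = φ⁻¹ ∘ ψ̃ is equivalent to a Young function then
φ⁻¹(x) ≤ C ζ⁻¹(x) ψ̃⁻¹(x) for large x, where ζ(x) = sup_y (φ(xy) − ψ(y)/y). -/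
theorem stmt17 (φ ψ φinv tψinv : ℝ → ℝ) (hφ : IsYoung φ) (hψ : IsYoung ψ)
    (hsup : Tendsto (fun x => φ x / x) atTop atTop)
    (htψ : StrictMonoOn (fun x => ψ x / x) (Set.Ici 0))
    (htψ0 : ψ 0 / 0 = 0)
    (htψi : Tendsto (fun x => ψ x / x) atTop atTop)
    (hφinv : ∀ x ≥ (0:ℝ), 0 ≤ φinv x ∧ φ (φinv x) = x)
    (htinv : ∀ x ≥ (0:ℝ), 0 ≤ tψinv x ∧ ψ (tψinv x) / tψinv x = x)
    (hη : ∃ Y, IsYoung Y ∧ EquivR (fun x => φinv (ψ x / x)) Y) :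
    ∃ C x₀ : ℝ, 0 < C ∧ 0 < x₀ ∧ ∀ x ≥ x₀,
      ENNReal.ofReal (φinv x) ≤
        ENNReal.ofReal C *
          (invE (zetaSup φ ψ) (ENNReal.ofReal x) * ENNReal.ofReal (tψinv x)) :=
  stmt17_general φ ψ φinv tψinv hφ htψ htψ0 hφinv htinv hη
end
end
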